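/- arXiv:0705.1794 — 7 statements merged into one kernel-verified Lean document; each statement's English description precedes it below -/
import Mathlib

section
/- Let (Ω, F, P) be a probability space with a filtration (F_n)_{n∈ℕ}, and let (X_n), (β_n), (ξ_n), (ζ_n) be sequences of nonnegative, adapted random variables with each X_n integrable, such that for every n ≥ 1, E[X_n | F_{n−1}] ≤ X_{n−1}(1 + β_{n−1}) + ξ_{n−1} − ζ_{n−1} almost surely. Then, almost surely on the event {Σ_{n≥0} β_n < ∞} ∩ {Σ_{n≥0} ξ_n < ∞}, the sequence (X_n) converges to a finite limit and Σ_{n≥0} ζ_n < ∞. -/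
/-!
Write `P_n = ∏_{k<n} (1 + β_k)`. Dividing the hypothesis by `P_{n+1}` shows that
`Y_n = X_n / P_n + ∑_{k<n} (ζ_k - ξ_k) / P_{k+1}` satisfies `E[Y_{n+1} | F_n] ≤ Y_n`, and
`Y_n ≥ -∑_{k<n} ξ_k`. Since `ξ` need not be integrable, the increments of `Y` are switched off
from the first time the partial sums of `ξ` exceed a level `M`: the resulting process is an
integrable supermartingale bounded below by `-M`, hence converges a.s., and it coincides with `Y`
on `{∑ ξ ≤ M}`. Finally, when `∑ β < ∞` the products `P_n` increase to a finite limit, so the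
convergence of `Y` forces that of `X_n = P_n · (X_n / P_n)` and the summability of `ζ`.
-/

open MeasureTheory Filter Topology Finset

section Supermartingale

variable {Ω : Type*} {m0 : MeasurableSpace Ω} {μ : Measure Ω}

lemma condExp_mul_sub_nonneg {m : MeasurableSpace Ω} (hm : m ≤ m0) [SigmaFinite (μ.trim hm)]
    {c g Y : Ω → ℝ} (hc : StronglyMeasurable[m] c) (hc0 : 0 ≤ᵐ[μ] c)
    (hg : StronglyMeasurable[m] g) (hY : Integrable Y μ) (hcY : Integrable (c * Y) μ)
    (hcg : Integrable (c * g) μ) (hYg : μ[Y|m] ≤ᵐ[μ] g) : 0 ≤ᵐ[μ] μ[c * (g - Y)|m] := by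
  have hpull : μ[c * (g - Y)|m] =ᵐ[μ] c * g - c * μ[Y|m] := by
    rw [mul_sub]
    filter_upwards [condExp_sub hcg hcY m, condExp_mul_of_stronglyMeasurable_left hc hcY hY]
      with ω h₁ h₂
    rw [h₁, Pi.sub_apply, h₂, condExp_of_stronglyMeasurable hm (hc.mul hg) hcg]
    rfl
  filter_upwards [hpull, hc0, hYg] with ω h hc0 hYg
  simp only [h, Pi.sub_apply, Pi.mul_apply, Pi.zero_apply, sub_nonneg] at hc0 ⊢
  exact mul_le_mul_of_nonneg_left hYg hc0

variable {ℱ : Filtration ℕ m0}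

theorem supermartingale_add_sum_mul_sub [IsFiniteMeasure μ] {Y g w : ℕ → Ω → ℝ}
    (hY : Adapted ℱ Y) (hg : Adapted ℱ g) (hw : Adapted ℱ w) (hw0 : ∀ n, 0 ≤ᵐ[μ] w n)
    (hYint : ∀ n, Integrable (Y n) μ) (hwY : ∀ n, Integrable (w n * Y (n + 1)) μ)
    (hwg : ∀ n, Integrable (w n * g n) μ) (hYg : ∀ n, μ[Y (n + 1)|ℱ n] ≤ᵐ[μ] g n) :
    Supermartingale (fun n ω => Y 0 ω + ∑ k ∈ range n, w k ω * (Y (k + 1) ω - g k ω)) ℱ μ := by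
  refine supermartingale_of_condExp_sub_nonneg_nat (fun n => ?_) (fun n => ?_) fun n => ?_
  · refine (Measurable.add (hY.measurable_le n.zero_le) ?_).stronglyMeasurable
    refine Finset.measurable_sum _ fun k hk => ?_
    have hk : k < n := mem_range.1 hk
    exact (hw.measurable_le hk.le).mul ((hY.measurable_le hk).sub (hg.measurable_le hk.le))
  · refine (hYint 0).add (integrable_finsetSum _ fun k _ => ?_)
    simp only [mul_sub]
    exact (hwY k).sub (hwg k)
  · have hdiff : (fun ω => Y 0 ω + ∑ k ∈ range n, w k ω * (Y (k + 1) ω - g k ω)) -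
        (fun ω => Y 0 ω + ∑ k ∈ range (n + 1), w k ω * (Y (k + 1) ω - g k ω)) =
        w n * (g n - Y (n + 1)) := by
      ext ω
      simp only [Pi.sub_apply, Pi.mul_apply, sum_range_succ]
      ring
    rw [hdiff]
    exact condExp_mul_sub_nonneg (ℱ.le n) (hw n).stronglyMeasurable (hw0 n)
      (hg n).stronglyMeasurable (hYint (n + 1)) (hwY n) (hwg n) (hYg n)

theorem MeasureTheory.Supermartingale.exists_ae_tendsto_of_bddBelow [IsFiniteMeasure μ]
    {f : ℕ → Ω → ℝ} {c : ℝ} (hf : Supermartingale f ℱ μ) (hbdd : ∀ n, ∀ᵐ ω ∂μ, c ≤ f n ω) :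
    ∀ᵐ ω ∂μ, ∃ l, Tendsto (fun n => f n ω) atTop (𝓝 l) := by
  set R : ℝ := ∫ ω, f 0 ω ∂μ + 2 * |c| * μ.real Set.univ
  have hL1 : ∀ n, eLpNorm ((-f) n) 1 μ ≤ R.toNNReal := fun n => by
    have habs : ∀ᵐ ω ∂μ, ‖f n ω‖ ≤ f n ω + 2 * |c| := by
      filter_upwards [hbdd n] with ω hω
      rw [Real.norm_eq_abs, abs_le]
      constructor <;> linarith [neg_abs_le c, le_abs_self c]
    have hint : ∫ ω, ‖f n ω‖ ∂μ ≤ R :=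
      calc ∫ ω, ‖f n ω‖ ∂μ ≤ ∫ ω, (f n ω + 2 * |c|) ∂μ :=
            integral_mono_ae (hf.integrable n).norm ((hf.integrable n).add (integrable_const _))
              habs
        _ = ∫ ω, f n ω ∂μ + 2 * |c| * μ.real Set.univ := by
            rw [integral_add (hf.integrable n) (integrable_const _), integral_const, smul_eq_mul,
              mul_comm]
        _ ≤ R := by
            have := hf.setIntegral_le n.zero_le MeasurableSet.univ
            rw [setIntegral_univ, setIntegral_univ] at this
            linarith
    rw [Pi.neg_apply, eLpNorm_neg, eLpNorm_one_eq_lintegral_enorm,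
      ← ofReal_integral_norm_eq_lintegral_enorm (hf.integrable n)]
    exact ENNReal.ofReal_le_ofReal hint
  filter_upwards [hf.neg.exists_ae_tendsto_of_bdd hL1] with ω ⟨l, hl⟩
  exact ⟨-l, by simpa using hl.neg⟩

end Supermartingale

namespace RobbinsSiegmund

variable {b u z x : ℕ → ℝ}

def prodOneAdd (b : ℕ → ℝ) (n : ℕ) : ℝ := ∏ k ∈ range n, (1 + b k)

lemma prodOneAdd_succ (b : ℕ → ℝ) (n : ℕ) : prodOneAdd b (n + 1) = prodOneAdd b n * (1 + b n) :=
  prod_range_succ _ _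

lemma one_le_prodOneAdd (hb : ∀ k, 0 ≤ b k) (n : ℕ) : 1 ≤ prodOneAdd b n :=
  one_le_prod fun k _ => le_add_of_nonneg_right (hb k)

lemma prodOneAdd_pos (hb : ∀ k, 0 ≤ b k) (n : ℕ) : 0 < prodOneAdd b n :=
  one_pos.trans_le (one_le_prodOneAdd hb n)

lemma prodOneAdd_le_exp_tsum (hb : ∀ k, 0 ≤ b k) (hbs : Summable b) (n : ℕ) :
    prodOneAdd b n ≤ Real.exp (∑' k, b k) :=
  (Real.prod_one_add_le_exp_sum _ hb).trans (Real.exp_le_exp.2 (hbs.sum_le_tsum _ fun k _ => hb k))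

noncomputable def discounted (b u z x : ℕ → ℝ) (n : ℕ) : ℝ :=
  x n / prodOneAdd b n + ∑ k ∈ range n, (z k - u k) / prodOneAdd b (k + 1)

lemma discounted_succ (hb : ∀ k, 0 ≤ b k) (n : ℕ) :
    discounted b u z x (n + 1) = discounted b u z x n +
      (x (n + 1) - (x n * (1 + b n) + u n - z n)) / prodOneAdd b (n + 1) := by
  have hx : x n / prodOneAdd b n = x n * (1 + b n) / prodOneAdd b (n + 1) := by
    rw [prodOneAdd_succ, mul_div_mul_right _ _ (by linarith [hb n])]
  simp only [discounted, sum_range_succ, hx]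
  ring

lemma neg_sum_le_discounted (hb : ∀ k, 0 ≤ b k) (hu : ∀ k, 0 ≤ u k) (hz : ∀ k, 0 ≤ z k)
    (hx : ∀ k, 0 ≤ x k) (n : ℕ) : -∑ k ∈ range n, u k ≤ discounted b u z x n := by
  have hterm : ∀ k, -u k ≤ (z k - u k) / prodOneAdd b (k + 1) := fun k => by
    rw [le_div_iff₀ (prodOneAdd_pos hb _)]
    nlinarith [one_le_prodOneAdd hb (k + 1), hu k, hz k]
  calc -∑ k ∈ range n, u k = ∑ k ∈ range n, -u k := by rw [sum_neg_distrib]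
    _ ≤ ∑ k ∈ range n, (z k - u k) / prodOneAdd b (k + 1) := sum_le_sum fun k _ => hterm k
    _ ≤ discounted b u z x n :=
      le_add_of_nonneg_left (div_nonneg (hx n) (prodOneAdd_pos hb n).le)

theorem tendsto_and_summable_of_tendsto_discounted (hb : ∀ k, 0 ≤ b k) (hu : ∀ k, 0 ≤ u k)
    (hz : ∀ k, 0 ≤ z k) (hx : ∀ k, 0 ≤ x k) (hbs : Summable b) (hus : Summable u) {s : ℝ}
    (hs : Tendsto (discounted b u z x) atTop (𝓝 s)) :
    (∃ l, Tendsto x atTop (𝓝 l)) ∧ Summable z := by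
  set P := prodOneAdd b
  have hP1 : ∀ n, 1 ≤ P n := one_le_prodOneAdd hb
  have hP0 : ∀ n, 0 < P n := prodOneAdd_pos hb
  have hu' : Summable fun k => u k / P (k + 1) :=
    hus.of_nonneg_of_le (fun k => div_nonneg (hu k) (hP0 _).le)
      fun k => div_le_self (hu k) (hP1 _)
  have hV : Tendsto (fun n => x n / P n + ∑ k ∈ range n, z k / P (k + 1)) atTop
      (𝓝 (s + ∑' k, u k / P (k + 1))) :=
    (hs.add hu'.hasSum.tendsto_sum_nat).congr fun n => by
      simp only [discounted, sub_div, sum_sub_distrib, P]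
      ring
  have hz' : Summable fun k => z k / P (k + 1) := by
    obtain ⟨C, hC⟩ := hV.bddAbove_range
    refine summable_of_sum_range_le (c := C) (fun k => div_nonneg (hz k) (hP0 _).le) fun n => ?_
    exact (le_add_of_nonneg_left (div_nonneg (hx n) (hP0 n).le)).trans (hC ⟨n, rfl⟩)
  have hP : Tendsto P atTop (𝓝 (∏' k, (1 + b k))) :=
    (Real.multipliable_one_add_of_summable hbs).tendsto_prod_tprod_nat
  constructor
  · refine ⟨_, ((hV.sub hz'.hasSum.tendsto_sum_nat).mul hP).congr fun n => ?_⟩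
    rw [add_sub_cancel_right, div_mul_cancel₀ _ (hP0 n).ne']
  · refine (hz'.mul_right (Real.exp (∑' k, b k))).of_nonneg_of_le hz fun k => ?_
    calc z k = z k / P (k + 1) * P (k + 1) := (div_mul_cancel₀ _ (hP0 _).ne').symm
      _ ≤ z k / P (k + 1) * Real.exp (∑' k, b k) :=
        mul_le_mul_of_nonneg_left (prodOneAdd_le_exp_tsum hb hbs _)
          (div_nonneg (hz k) (hP0 _).le)

noncomputable def stopWeight (b u : ℕ → ℝ) (M : ℝ) (k : ℕ) : ℝ :=
  if ∑ j ∈ range (k + 1), u j ≤ M then (prodOneAdd b (k + 1))⁻¹ else 0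

noncomputable def stoppedDiscounted (b u z x : ℕ → ℝ) (M : ℝ) (n : ℕ) : ℝ :=
  x 0 + ∑ k ∈ range n, stopWeight b u M k * (x (k + 1) - (x k * (1 + b k) + u k - z k))

lemma stoppedDiscounted_succ (M : ℝ) (n : ℕ) :
    stoppedDiscounted b u z x M (n + 1) = stoppedDiscounted b u z x M n +
      stopWeight b u M n * (x (n + 1) - (x n * (1 + b n) + u n - z n)) := by
  rw [stoppedDiscounted, stoppedDiscounted, sum_range_succ, add_assoc]

lemma stoppedDiscounted_eq_discounted (hb : ∀ k, 0 ≤ b k) {M : ℝ} {n : ℕ}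
    (h : ∀ k < n, ∑ j ∈ range (k + 1), u j ≤ M) :
    stoppedDiscounted b u z x M n = discounted b u z x n := by
  induction n with
  | zero => simp [stoppedDiscounted, discounted, prodOneAdd]
  | succ n ih =>
    rw [stoppedDiscounted_succ, ih fun k hk => h k (by omega), discounted_succ hb, stopWeight,
      if_pos (h n n.lt_succ_self), inv_mul_eq_div]

lemma neg_le_stoppedDiscounted (hb : ∀ k, 0 ≤ b k) (hu : ∀ k, 0 ≤ u k) (hz : ∀ k, 0 ≤ z k)
    (hx : ∀ k, 0 ≤ x k) {M : ℝ} (hM : 0 ≤ M) (n : ℕ) : -M ≤ stoppedDiscounted b u z x M n := by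
  induction n with
  | zero => simpa [stoppedDiscounted] using (neg_nonpos.2 hM).trans (hx 0)
  | succ n ih =>
    by_cases hn : ∑ j ∈ range (n + 1), u j ≤ M
    · have hk : ∀ k < n + 1, ∑ j ∈ range (k + 1), u j ≤ M := fun k hk =>
        (sum_le_sum_of_subset_of_nonneg (range_subset_range.2 (by omega))
          fun j _ _ => hu j).trans hn
      rw [stoppedDiscounted_eq_discounted hb hk]
      exact (neg_le_neg hn).trans (neg_sum_le_discounted hb hu hz hx _)
    · rwa [stoppedDiscounted_succ, stopWeight, if_neg hn, zero_mul, add_zero]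

lemma stopWeight_nonneg (hb : ∀ k, 0 ≤ b k) (M : ℝ) (n : ℕ) : 0 ≤ stopWeight b u M n := by
  unfold stopWeight
  split_ifs
  exacts [inv_nonneg.2 (prodOneAdd_pos hb _).le, le_rfl]

lemma stopWeight_le_one (hb : ∀ k, 0 ≤ b k) (M : ℝ) (n : ℕ) : stopWeight b u M n ≤ 1 := by
  unfold stopWeight
  split_ifs
  exacts [inv_le_one_of_one_le₀ (one_le_prodOneAdd hb _), zero_le_one]

lemma stopWeight_mul_le (hb : ∀ k, 0 ≤ b k) (hu : ∀ k, 0 ≤ u k) (hx : ∀ k, 0 ≤ x k) {M : ℝ}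
    (hM : 0 ≤ M) (n : ℕ) : stopWeight b u M n * (x n * (1 + b n) + u n) ≤ x n + M := by
  unfold stopWeight
  split_ifs with h
  · have hx' : (prodOneAdd b (n + 1))⁻¹ * (x n * (1 + b n)) = x n / prodOneAdd b n := by
      rw [inv_mul_eq_div, prodOneAdd_succ, mul_div_mul_right _ _ (by linarith [hb n])]
    have hu' : u n ≤ M := (single_le_sum (fun j _ => hu j) (self_mem_range_succ n)).trans h
    rw [mul_add, hx', inv_mul_eq_div]
    exact add_le_add (div_le_self (hx n) (one_le_prodOneAdd hb n))
      ((div_le_self (hu n) (one_le_prodOneAdd hb _)).trans hu')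
  · simpa using add_nonneg (hx n) hM

variable {Ω : Type*} {m0 : MeasurableSpace Ω} {μ : Measure Ω} {ℱ : Filtration ℕ m0}

lemma adapted_stopWeight {β ξ : ℕ → Ω → ℝ} (hβ : Adapted ℱ β) (hξ : Adapted ℱ ξ) (M : ℝ) :
    Adapted ℱ fun n ω => stopWeight (β · ω) (ξ · ω) M n := fun n => by
  have hsum : Measurable[ℱ n] fun ω => ∑ j ∈ range (n + 1), ξ j ω :=
    Finset.measurable_sum _ fun j hj => hξ.measurable_le (mem_range_succ_iff.1 hj)
  have hprod : Measurable[ℱ n] fun ω => prodOneAdd (β · ω) (n + 1) :=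
    Finset.measurable_prod _ fun j hj =>
      measurable_const.add (hβ.measurable_le (mem_range_succ_iff.1 hj))
  exact Measurable.ite (measurableSet_le hsum measurable_const) hprod.inv measurable_const

theorem supermartingale_stoppedDiscounted [IsFiniteMeasure μ] {X β ξ ζ : ℕ → Ω → ℝ}
    (hX : Adapted ℱ X) (hβ : Adapted ℱ β) (hξ : Adapted ℱ ξ) (hζ : Adapted ℱ ζ)
    (hX0 : ∀ n ω, 0 ≤ X n ω) (hβ0 : ∀ n ω, 0 ≤ β n ω) (hξ0 : ∀ n ω, 0 ≤ ξ n ω)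
    (hζ0 : ∀ n ω, 0 ≤ ζ n ω) (hXint : ∀ n, Integrable (X n) μ)
    (hcond : ∀ n, μ[X (n + 1)|ℱ n] ≤ᵐ[μ] fun ω => X n ω * (1 + β n ω) + ξ n ω - ζ n ω)
    {M : ℝ} (hM : 0 ≤ M) :
    Supermartingale (fun n ω => stoppedDiscounted (β · ω) (ξ · ω) (ζ · ω) (X · ω) M n) ℱ μ := by
  have hw := adapted_stopWeight hβ hξ M
  have hζle : ∀ n, ∀ᵐ ω ∂μ, ζ n ω ≤ X n ω * (1 + β n ω) + ξ n ω := fun n => by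
    filter_upwards [hcond n, condExp_nonneg (ae_of_all μ (hX0 (n + 1)))] with ω h₁ h₂
    rw [Pi.zero_apply] at h₂
    linarith
  have hg : Adapted ℱ fun n ω => X n ω * (1 + β n ω) + ξ n ω - ζ n ω := fun n =>
    (((hX n).mul (measurable_const.add (hβ n))).add (hξ n)).sub (hζ n)
  refine supermartingale_add_sum_mul_sub hX hg hw
    (fun n => ae_of_all _ fun ω => stopWeight_nonneg (hβ0 · ω) M n) hXint (fun n => ?_)
    (fun n => ?_) hcond
  · refine (hXint (n + 1)).mono' (hw.measurable.mul hX.measurable).aestronglyMeasurable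
      (ae_of_all _ fun ω => ?_)
    rw [Pi.mul_apply, norm_mul, Real.norm_of_nonneg (stopWeight_nonneg (hβ0 · ω) M n),
      Real.norm_of_nonneg (hX0 (n + 1) ω)]
    exact mul_le_of_le_one_left (hX0 (n + 1) ω) (stopWeight_le_one (hβ0 · ω) M n)
  · refine ((hXint n).add (integrable_const M)).mono'
      (hw.measurable.mul hg.measurable).aestronglyMeasurable ?_
    filter_upwards [hζle n] with ω hζω
    have hw0 := stopWeight_nonneg (u := (ξ · ω)) (hβ0 · ω) M n
    have hwle := stopWeight_mul_le (hβ0 · ω) (hξ0 · ω) (hX0 · ω) hM n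
    have hwg : stopWeight (β · ω) (ξ · ω) M n * (X n ω * (1 + β n ω) + ξ n ω - ζ n ω) ≤
        stopWeight (β · ω) (ξ · ω) M n * (X n ω * (1 + β n ω) + ξ n ω) :=
      mul_le_mul_of_nonneg_left (by linarith [hζ0 n ω]) hw0
    have hwg0 := mul_nonneg hw0 (sub_nonneg.2 hζω)
    rw [Pi.mul_apply, Real.norm_eq_abs, abs_of_nonneg hwg0, Pi.add_apply]
    exact hwg.trans hwle

end RobbinsSiegmund

open RobbinsSiegmund

/-- **Robbins–Siegmund theorem.** If `(X_n)`, `(β_n)`, `(ξ_n)`, `(ζ_n)` are nonnegative adapted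
sequences with each `X_n` integrable and
`E[X_{n+1} | F_n] ≤ X_n (1 + β_n) + ξ_n − ζ_n` a.s. for every `n`, then almost surely on
`{Σ β_n < ∞} ∩ {Σ ξ_n < ∞}` the sequence `(X_n)` converges to a finite limit and `Σ ζ_n < ∞`. -/
theorem robbins_siegmund
    {Ω : Type*} {m : MeasurableSpace Ω} {μ : Measure Ω} [IsProbabilityMeasure μ]
    (ℱ : Filtration ℕ m)
    (X β ξ ζ : ℕ → Ω → ℝ)
    (hXadp : Adapted ℱ X) (hβadp : Adapted ℱ β) (hξadp : Adapted ℱ ξ) (hζadp : Adapted ℱ ζ)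
    (hX0 : ∀ n ω, 0 ≤ X n ω) (hβ0 : ∀ n ω, 0 ≤ β n ω)
    (hξ0 : ∀ n ω, 0 ≤ ξ n ω) (hζ0 : ∀ n ω, 0 ≤ ζ n ω)
    (hXint : ∀ n, Integrable (X n) μ)
    (hcond : ∀ n : ℕ,
      μ[X (n + 1) | ℱ n] ≤ᵐ[μ] fun ω => X n ω * (1 + β n ω) + ξ n ω - ζ n ω) :
    ∀ᵐ ω ∂μ,
      ((Summable fun n => β n ω) ∧ (Summable fun n => ξ n ω)) →
        ((∃ l : ℝ, Tendsto (fun n => X n ω) atTop (𝓝 l)) ∧ Summable fun n => ζ n ω) := by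
  have hconv : ∀ M : ℕ, ∀ᵐ ω ∂μ, ∃ s, Tendsto
      (fun n => stoppedDiscounted (β · ω) (ξ · ω) (ζ · ω) (X · ω) M n) atTop (𝓝 s) := fun M =>
    (supermartingale_stoppedDiscounted hXadp hβadp hξadp hζadp hX0 hβ0 hξ0 hζ0 hXint hcond
      M.cast_nonneg).exists_ae_tendsto_of_bddBelow fun n => ae_of_all _ fun ω =>
        neg_le_stoppedDiscounted (hβ0 · ω) (hξ0 · ω) (hζ0 · ω) (hX0 · ω) M.cast_nonneg n
  filter_upwards [ae_all_iff.2 hconv] with ω hω ⟨hβ, hξ⟩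
  obtain ⟨M, hM⟩ := exists_nat_ge (∑' k, ξ k ω)
  obtain ⟨s, hs⟩ := hω M
  have hstop : ∀ n, stoppedDiscounted (β · ω) (ξ · ω) (ζ · ω) (X · ω) M n =
      discounted (β · ω) (ξ · ω) (ζ · ω) (X · ω) n := fun n =>
    stoppedDiscounted_eq_discounted (hβ0 · ω) fun k _ =>
      (hξ.sum_le_tsum _ fun j _ => hξ0 j ω).trans hM
  exact tendsto_and_summable_of_tendsto_discounted (hβ0 · ω) (hξ0 · ω) (hζ0 · ω) (hX0 · ω)
    hβ hξ (hs.congr hstop)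
end

section
/- Let (Ω, F, (F_n)_{n∈ℕ}, P) be a filtered probability space. Let (X_n) be a nonnegative adapted sequence of integrable random variables, (β_n), (ξ_n), (ζ_n) nonnegative adapted sequences, (M_n) a martingale with M_0 = 0, and (A_n) a sequence of random variables with A_0 = 0 and A_n F_{n−1}-measurable for n ≥ 1, such that for every n ≥ 1: X_n = X_0 + Σ_{i=1}^n X_{i−1} β_{i−1} + A_n + M_n, A_n ≤ Σ_{i=1}^n (ξ_{i−1} − ζ_{i−1}), and A_n − A_{n−1} ≤ ξ_{n−1}. Then almost surely the event {Σ_{i≥0} ξ_i < ∞} ∩ {Σ_{i≥0} β_i < ∞} is contained in the event where (X_n) converges to a finite limit and Σ_{i≥0} ζ_i < ∞. -/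
/-!
Write `P n = ∏_{i<n} (1 + β i)`. Dividing the decomposition by `P` gives the pathwise identity
`X n / P n + ∑_{k<n} (ξ k - ΔA k) / P (k+1) = X 0 + ∑_{k<n} ξ k / P (k+1) + N n`,
where `ΔA k = A (k+1) - A k ≤ ξ k` and `N n = ∑_{k<n} (M (k+1) - M k) / P (k+1)` is a martingale
transform with coefficients in `(0, 1]`. Since `X ≥ 0` and `P ≥ 1`, `N n ≥ -(X 0 + ∑_{k<n} ξ k)`,
a predictable nondecreasing bound. Switching the coefficients off once this bound exceeds `K`
gives a supermartingale bounded below by `-K`, hence a.s. convergent; letting `K → ∞`,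
`N` converges a.s. on `{∑ ξ < ∞}`.

On `{∑ ξ < ∞, ∑ β < ∞}`, `P` converges to a finite positive limit, so the identity makes the
nonnegative series `∑ (ξ k - ΔA k)` converge. Then `X n / P n`, hence `X n`, converges, and
`∑_{k<n} ζ k ≤ ∑_{k<n} ξ k - A n = ∑_{k<n} (ξ k - ΔA k)` stays bounded.
-/

open MeasureTheory Filter Topology Finset

theorem Finset.exists_sum_range_ite_eq {M : Type*} [AddCommMonoid M] {p : ℕ → Prop}
    [DecidablePred p] (hp : Antitone p) (f : ℕ → M) (n : ℕ) :
    ∃ j ≤ n, (∀ k < j, p k) ∧ ∑ k ∈ range n, (if p k then f k else 0) = ∑ k ∈ range j, f k := by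
  induction n with
  | zero => exact ⟨0, le_rfl, by simp, by simp⟩
  | succ n ih =>
    by_cases hn : p n
    · have hall : ∀ k < n + 1, p k := fun k hk => hp (Nat.le_of_lt_succ hk) hn
      exact ⟨n + 1, le_rfl, hall,
        sum_congr rfl fun k hk => if_pos (hall k (mem_range.1 hk))⟩
    · obtain ⟨j, hjn, hj, hsum⟩ := ih
      exact ⟨j, hjn.trans n.le_succ, hj, by rw [sum_range_succ, if_neg hn, add_zero, hsum]⟩

namespace MeasureTheory

variable {Ω : Type*} {m : MeasurableSpace Ω} {μ : Measure Ω} {ℱ : Filtration ℕ m}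

@[to_additive]
theorem Adapted.prod_range_succ {M : Type*} [CommMonoid M] [MeasurableSpace M]
    [MeasurableMul₂ M] {u : ℕ → Ω → M} (hu : Adapted ℱ u) :
    Adapted ℱ fun n ω => ∏ k ∈ range (n + 1), u k ω :=
  fun _ => Finset.measurable_prod _ fun _ hk =>
    (hu _).mono (ℱ.mono (Nat.le_of_lt_succ (mem_range.1 hk))) le_rfl

theorem Supermartingale.sum_mul_sub [IsFiniteMeasure μ] {R : ℝ} {c f : ℕ → Ω → ℝ}
    (hf : Supermartingale f ℱ μ) (hc : StronglyAdapted ℱ c) (hbdd : ∀ n ω, c n ω ≤ R)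
    (hnonneg : ∀ n ω, 0 ≤ c n ω) :
    Supermartingale (fun n => ∑ k ∈ range n, c k * (f (k + 1) - f k)) ℱ μ := by
  have h := (hf.neg.sum_mul_sub hc hbdd hnonneg).neg
  have heq : (-fun n => ∑ k ∈ range n, c k * ((-f) (k + 1) - (-f) k)) =
      fun n => ∑ k ∈ range n, c k * (f (k + 1) - f k) := by
    funext n
    simp only [Pi.neg_apply, ← sum_neg_distrib]
    exact sum_congr rfl fun k _ => by ring
  rwa [heq] at h

theorem Supermartingale.exists_ae_tendsto_of_bddBelow_s1 [IsFiniteMeasure μ] {R : ℝ}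
    {f : ℕ → Ω → ℝ} (hf : Supermartingale f ℱ μ) (hR : ∀ n ω, R ≤ f n ω) :
    ∀ᵐ ω ∂μ, ∃ c, Tendsto (fun n => f n ω) atTop (𝓝 c) := by
  -- `f - R` is a nonnegative supermartingale, so its L¹ norms are its nonincreasing integrals
  set g : ℕ → Ω → ℝ := f - fun _ _ => R
  have hg : Supermartingale g ℱ μ := hf.sub_martingale (martingale_const ℱ μ R)
  have hg0 : ∀ n ω, 0 ≤ g n ω := fun n ω => sub_nonneg.2 (hR n ω)
  have hbdd : ∀ n, eLpNorm ((-g) n) 1 μ ≤ (∫ ω, g 0 ω ∂μ).toNNReal := by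
    intro n
    have h := hg.setIntegral_le (Nat.zero_le n) MeasurableSet.univ
    simp only [Measure.restrict_univ] at h
    rw [Pi.neg_apply, eLpNorm_neg, eLpNorm_one_eq_lintegral_enorm,
      lintegral_congr fun ω => Real.enorm_of_nonneg (hg0 n ω),
      ← ofReal_integral_eq_lintegral_ofReal (hg.integrable n) (ae_of_all _ (hg0 n))]
    exact ENNReal.ofReal_le_ofReal h
  filter_upwards [hg.neg.exists_ae_tendsto_of_bdd hbdd] with ω ⟨l, hl⟩
  exact ⟨R - l, by simpa [g, sub_eq_add_neg] using hl.neg.const_add R⟩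

theorem Supermartingale.exists_ae_tendsto_sum_mul_sub_of_bddAbove [IsFiniteMeasure μ] {R : ℝ}
    {M c V : ℕ → Ω → ℝ} (hM : Supermartingale M ℱ μ) (hc : Adapted ℱ c)
    (hbdd : ∀ n ω, c n ω ≤ R) (hnonneg : ∀ n ω, 0 ≤ c n ω)
    (hV : Adapted ℱ fun n => V (n + 1)) (hVmono : ∀ ω, Monotone fun n => V n ω)
    (hle : ∀ n ω, -V n ω ≤ ∑ k ∈ range n, c k ω * (M (k + 1) ω - M k ω)) :
    ∀ᵐ ω ∂μ, BddAbove (Set.range fun n => V n ω) →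
      ∃ l, Tendsto (fun n => ∑ k ∈ range n, c k ω * (M (k + 1) ω - M k ω)) atTop (𝓝 l) := by
  classical
  set G : ℕ → ℕ → Set Ω := fun K k => {ω | V (k + 1) ω ≤ K}
  have hconv : ∀ K : ℕ, ∀ᵐ ω ∂μ, ∃ l, Tendsto (fun n =>
      ∑ k ∈ range n, (G K k).indicator (c k) ω * (M (k + 1) ω - M k ω)) atTop (𝓝 l) := by
    intro K
    have hsuper := hM.sum_mul_sub (c := fun k => (G K k).indicator (c k))
      (fun k => ((hc k).indicator (measurableSet_le (hV k) measurable_const)).stronglyMeasurable)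
      (fun k ω => (Set.indicator_le_self' (fun ω _ => hnonneg k ω) ω).trans (hbdd k ω))
      (fun k ω => Set.indicator_nonneg (fun ω _ => hnonneg k ω) ω)
    -- the localized transform is the original one stopped when `V` first exceeds `K`
    have hlow : ∀ n ω,
        -(K : ℝ) ≤ (∑ k ∈ range n, (G K k).indicator (c k) * (M (k + 1) - M k)) ω := by
      intro n ω
      obtain ⟨j, -, hj, hsum⟩ := exists_sum_range_ite_eq (p := fun k => ω ∈ G K k)
        (fun _ _ hkk' h => (hVmono ω (Nat.succ_le_succ hkk')).trans h)
        (fun k => c k ω * (M (k + 1) ω - M k ω)) n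
      simp only [Finset.sum_apply, Pi.mul_apply, Pi.sub_apply, Set.indicator_apply, ite_mul,
        zero_mul, hsum]
      rcases j with _ | j
      · simp
      · linarith [hle (j + 1) ω, show V (j + 1) ω ≤ K from hj j j.lt_succ_self]
    simpa only [Finset.sum_apply, Pi.mul_apply, Pi.sub_apply] using
      hsuper.exists_ae_tendsto_of_bddBelow_s1 hlow
  filter_upwards [ae_all_iff.2 hconv] with ω hω ⟨C, hC⟩
  obtain ⟨K, hK⟩ := exists_nat_ge C
  refine (hω K).imp fun l hl => hl.congr fun n => sum_congr rfl fun k _ => ?_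
  rw [Set.indicator_of_mem (show ω ∈ G K k from (hC ⟨k + 1, rfl⟩).trans hK)]

end MeasureTheory

def prodOneAdd (b : ℕ → ℝ) (n : ℕ) : ℝ := ∏ i ∈ range n, (1 + b i)

noncomputable def discountedSum (b m : ℕ → ℝ) (n : ℕ) : ℝ :=
  ∑ k ∈ range n, (prodOneAdd b (k + 1))⁻¹ * (m (k + 1) - m k)

section Deterministic

variable {x b s z a m : ℕ → ℝ}

theorem one_le_prodOneAdd (hb : ∀ i, 0 ≤ b i) (n : ℕ) : 1 ≤ prodOneAdd b n :=
  one_le_prod fun i _ => le_add_of_nonneg_right (hb i)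

theorem inv_prodOneAdd_mul_le (hb : ∀ i, 0 ≤ b i) (n : ℕ) {y : ℝ} (hy : 0 ≤ y) :
    (prodOneAdd b n)⁻¹ * y ≤ y :=
  mul_le_of_le_one_left hy (inv_le_one_of_one_le₀ (one_le_prodOneAdd hb n))

theorem inv_prodOneAdd_mul_nonneg (hb : ∀ i, 0 ≤ b i) (n : ℕ) {y : ℝ} (hy : 0 ≤ y) :
    0 ≤ (prodOneAdd b n)⁻¹ * y :=
  mul_nonneg (inv_nonneg.2 (zero_le_one.trans (one_le_prodOneAdd hb n))) hy

theorem div_prodOneAdd_eq_add_sum {u : ℕ → ℝ} (hb : ∀ k, 1 + b k ≠ 0)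
    (hx : ∀ k, x (k + 1) = x k * (1 + b k) + u k) (n : ℕ) :
    x n / prodOneAdd b n = x 0 + ∑ k ∈ range n, (prodOneAdd b (k + 1))⁻¹ * u k := by
  induction n with
  | zero => simp [prodOneAdd]
  | succ n ih =>
    rw [sum_range_succ, ← add_assoc, ← ih, hx, prodOneAdd, prod_range_succ, ← prodOneAdd]
    field_simp [hb n]

theorem eq_mul_one_add_add_of_eq_add_sum
    (hx : ∀ n, x n = x 0 + ∑ i ∈ range n, x i * b i + a n + m n) (k : ℕ) :
    x (k + 1) = x k * (1 + b k) + (a (k + 1) - a k) + (m (k + 1) - m k) := by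
  have h := hx (k + 1)
  rw [sum_range_succ] at h
  linarith [hx k]

variable (hrec : ∀ k, x (k + 1) = x k * (1 + b k) + (a (k + 1) - a k) + (m (k + 1) - m k))
include hrec

theorem div_prodOneAdd_add_sum_eq (hb : ∀ k, 1 + b k ≠ 0) (s : ℕ → ℝ) (n : ℕ) :
    x n / prodOneAdd b n + ∑ k ∈ range n, (prodOneAdd b (k + 1))⁻¹ * (s k - (a (k + 1) - a k)) =
      x 0 + ∑ k ∈ range n, (prodOneAdd b (k + 1))⁻¹ * s k + discountedSum b m n := by
  rw [div_prodOneAdd_eq_add_sum hb (fun k => by rw [hrec k, add_assoc]), discountedSum]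
  simp only [mul_add, mul_sub, sum_add_distrib, sum_sub_distrib]
  ring

theorem neg_le_discountedSum (hx : ∀ n, 0 ≤ x n) (hb : ∀ k, 0 ≤ b k) (hs : ∀ k, 0 ≤ s k)
    (hda : ∀ k, a (k + 1) - a k ≤ s k) (n : ℕ) :
    -(x 0 + ∑ k ∈ range n, s k) ≤ discountedSum b m n := by
  have h := div_prodOneAdd_add_sum_eq hrec (fun k => by linarith [hb k]) s n
  have hxn : 0 ≤ x n / prodOneAdd b n :=
    div_nonneg (hx n) (zero_le_one.trans (one_le_prodOneAdd hb n))
  have hd : 0 ≤ ∑ k ∈ range n, (prodOneAdd b (k + 1))⁻¹ * (s k - (a (k + 1) - a k)) :=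
    sum_nonneg fun k _ => inv_prodOneAdd_mul_nonneg hb _ (sub_nonneg.2 (hda k))
  have hs' : ∑ k ∈ range n, (prodOneAdd b (k + 1))⁻¹ * s k ≤ ∑ k ∈ range n, s k :=
    sum_le_sum fun k _ => inv_prodOneAdd_mul_le hb _ (hs k)
  linarith

theorem exists_tendsto_and_summable_of_tendsto_discountedSum (hx : ∀ n, 0 ≤ x n)
    (hb : ∀ k, 0 ≤ b k) (hs : ∀ k, 0 ≤ s k) (hz : ∀ k, 0 ≤ z k)
    (ha : ∀ n, a n ≤ ∑ k ∈ range n, (s k - z k)) (hda : ∀ k, a (k + 1) - a k ≤ s k)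
    (hbs : Summable b) (hss : Summable s) {l : ℝ}
    (hm : Tendsto (discountedSum b m) atTop (𝓝 l)) :
    (∃ l, Tendsto x atTop (𝓝 l)) ∧ Summable z := by
  set P := prodOneAdd b
  set d : ℕ → ℝ := fun k => s k - (a (k + 1) - a k)
  have hd : ∀ k, 0 ≤ d k := fun k => sub_nonneg.2 (hda k)
  have hid := div_prodOneAdd_add_sum_eq hrec (fun k => by linarith [hb k]) s
  have hP : Tendsto P atTop (𝓝 (∏' i, (1 + b i))) :=
    (Real.multipliable_one_add_of_summable hbs).hasProd.tendsto_prod_nat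
  obtain ⟨CP, hCP⟩ := hP.bddAbove_range
  obtain ⟨Cm, hCm⟩ := hm.bddAbove_range
  have hsP : Summable fun k => (P (k + 1))⁻¹ * s k :=
    hss.of_nonneg_of_le (fun k => inv_prodOneAdd_mul_nonneg hb _ (hs k))
      (fun k => inv_prodOneAdd_mul_le hb _ (hs k))
  have hdP : Summable fun k => (P (k + 1))⁻¹ * d k := by
    refine summable_of_sum_range_le (c := x 0 + ∑' k, s k + Cm)
      (fun k => inv_prodOneAdd_mul_nonneg hb _ (hd k)) fun n => ?_
    have hxn : 0 ≤ x n / P n := div_nonneg (hx n) (zero_le_one.trans (one_le_prodOneAdd hb n))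
    have hsn : ∑ k ∈ range n, (P (k + 1))⁻¹ * s k ≤ ∑' k, s k :=
      (sum_le_sum fun k _ => inv_prodOneAdd_mul_le hb _ (hs k)).trans
        (hss.sum_le_tsum _ fun k _ => hs k)
    linarith [hid n, hCm ⟨n, rfl⟩]
  have hds : Summable d := by
    refine (hdP.mul_left CP).of_nonneg_of_le hd fun k => ?_
    have hPk : 0 < P (k + 1) := zero_lt_one.trans_le (one_le_prodOneAdd hb _)
    calc d k = P (k + 1) * ((P (k + 1))⁻¹ * d k) := by field_simp
      _ ≤ CP * ((P (k + 1))⁻¹ * d k) :=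
        mul_le_mul_of_nonneg_right (hCP ⟨k + 1, rfl⟩) (inv_prodOneAdd_mul_nonneg hb _ (hd k))
  constructor
  · have hy : Tendsto (fun n => x n / P n) atTop
        (𝓝 (x 0 + ∑' k, (P (k + 1))⁻¹ * s k + l - ∑' k, (P (k + 1))⁻¹ * d k)) :=
      (((tendsto_const_nhds.add hsP.hasSum.tendsto_sum_nat).add hm).sub
        hdP.hasSum.tendsto_sum_nat).congr fun n => by linarith [hid n]
    exact ⟨_, (hy.mul hP).congr fun n =>
      div_mul_cancel₀ _ (zero_lt_one.trans_le (one_le_prodOneAdd hb n)).ne'⟩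
  · refine summable_of_sum_range_le (c := ∑' k, d k - a 0) hz fun n => ?_
    have hdn : ∑ k ∈ range n, d k = ∑ k ∈ range n, s k - (a n - a 0) := by
      rw [← sum_range_sub, ← sum_sub_distrib]
    have := ha n
    rw [sum_sub_distrib] at this
    linarith [hds.sum_le_tsum (range n) fun k _ => hd k]

end Deterministic

theorem semimartingale_convergence_discrete_general
    {Ω : Type*} {m : MeasurableSpace Ω} {μ : Measure Ω} [IsProbabilityMeasure μ]
    (ℱ : Filtration ℕ m)
    (X β ξ ζ M A : ℕ → Ω → ℝ)
    (hXadp : Adapted ℱ X) (hβadp : Adapted ℱ β) (hξadp : Adapted ℱ ξ)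
    (hX0 : ∀ n ω, 0 ≤ X n ω) (hβ0 : ∀ n ω, 0 ≤ β n ω)
    (hξ0 : ∀ n ω, 0 ≤ ξ n ω) (hζ0 : ∀ n ω, 0 ≤ ζ n ω)
    (hM : Martingale M ℱ μ) (hM0 : ∀ ω, M 0 ω = 0)
    (hA0 : ∀ ω, A 0 ω = 0)
    (hdecomp : ∀ n : ℕ, 1 ≤ n → ∀ ω,
      X n ω = X 0 ω + (∑ i ∈ Finset.range n, X i ω * β i ω) + A n ω + M n ω)
    (hAle : ∀ n : ℕ, 1 ≤ n → ∀ ω, A n ω ≤ ∑ i ∈ Finset.range n, (ξ i ω - ζ i ω))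
    (hAdiff : ∀ n : ℕ, 1 ≤ n → ∀ ω, A n ω - A (n - 1) ω ≤ ξ (n - 1) ω) :
    ∀ᵐ ω ∂μ,
      ((Summable fun i => ξ i ω) ∧ (Summable fun i => β i ω)) →
        ((∃ l : ℝ, Tendsto (fun n => X n ω) atTop (𝓝 l)) ∧ Summable fun i => ζ i ω) := by
  have hdec : ∀ ω n, X n ω = X 0 ω + ∑ i ∈ range n, X i ω * β i ω + A n ω + M n ω := by
    intro ω n
    rcases n.eq_zero_or_pos with rfl | hn
    · simp [hA0, hM0]
    · exact hdecomp n hn ω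
  have hle : ∀ ω n, A n ω ≤ ∑ i ∈ range n, (ξ i ω - ζ i ω) := by
    intro ω n
    rcases n.eq_zero_or_pos with rfl | hn
    · simp [hA0]
    · exact hAle n hn ω
  have hdA : ∀ ω k, A (k + 1) ω - A k ω ≤ ξ k ω := fun ω k => by
    simpa using hAdiff (k + 1) k.succ_pos ω
  have hrec ω := eq_mul_one_add_add_of_eq_add_sum (hdec ω)
  have hP ω : ∀ n, 1 ≤ prodOneAdd (β · ω) n := one_le_prodOneAdd (hβ0 · ω)
  have hconv := hM.supermartingale.exists_ae_tendsto_sum_mul_sub_of_bddAbove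
    (c := fun k ω => (prodOneAdd (β · ω) (k + 1))⁻¹)
    (V := fun n ω => X 0 ω + ∑ k ∈ range n, ξ k ω)
    (fun k => ((Adapted.prod_range_succ fun i => measurable_const.add (hβadp i)) k).inv)
    (fun k ω => inv_le_one_of_one_le₀ (hP ω _))
    (fun k ω => inv_nonneg.2 (zero_le_one.trans (hP ω _)))
    (fun k => ((hXadp 0).mono (ℱ.mono k.zero_le) le_rfl).add (hξadp.sum_range_succ k))
    (fun ω => monotone_const.add ((sum_mono_set_of_nonneg (hξ0 · ω)).comp range_mono))
    (fun n ω => neg_le_discountedSum (a := (A · ω)) (m := (M · ω)) (hrec ω) (hX0 · ω) (hβ0 · ω)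
      (hξ0 · ω) (hdA ω) n)
  filter_upwards [hconv] with ω hω ⟨hξs, hβs⟩
  obtain ⟨l, hl⟩ := hω (tendsto_const_nhds.add hξs.hasSum.tendsto_sum_nat).bddAbove_range
  exact exists_tendsto_and_summable_of_tendsto_discountedSum (a := (A · ω)) (m := (M · ω))
    (hrec ω) (hX0 · ω) (hβ0 · ω) (hξ0 · ω) (hζ0 · ω) (hle ω) (hdA ω) hβs hξs hl

/-- Discrete-time form of Corollary 1.4 (Remark 1.3): if the nonnegative adapted sequence
`(X_n)` has the decomposition `X_n = X_0 + Σ_{i=1}^n X_{i−1} β_{i−1} + A_n + M_n` with `M` a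
martingale vanishing at `0` and `A` predictable with `A_0 = 0`, and
`A_n ≤ Σ_{i=1}^n (ξ_{i−1} − ζ_{i−1})`, `A_n − A_{n−1} ≤ ξ_{n−1}`, then almost surely the event
`{Σ ξ_i < ∞} ∩ {Σ β_i < ∞}` is contained in the event where `(X_n)` converges to a finite limit
and `Σ ζ_i < ∞`. -/
theorem semimartingale_convergence_discrete
    {Ω : Type*} {m : MeasurableSpace Ω} {μ : Measure Ω} [IsProbabilityMeasure μ]
    (ℱ : Filtration ℕ m)
    (X β ξ ζ M A : ℕ → Ω → ℝ)
    (hXadp : Adapted ℱ X) (hβadp : Adapted ℱ β) (hξadp : Adapted ℱ ξ) (hζadp : Adapted ℱ ζ)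
    (hX0 : ∀ n ω, 0 ≤ X n ω) (hβ0 : ∀ n ω, 0 ≤ β n ω)
    (hξ0 : ∀ n ω, 0 ≤ ξ n ω) (hζ0 : ∀ n ω, 0 ≤ ζ n ω)
    (hXint : ∀ n, Integrable (X n) μ)
    (hM : Martingale M ℱ μ) (hM0 : ∀ ω, M 0 ω = 0)
    (hA0 : ∀ ω, A 0 ω = 0)
    (hApred : ∀ n : ℕ, StronglyMeasurable[ℱ n] (A (n + 1)))
    (hdecomp : ∀ n : ℕ, 1 ≤ n → ∀ ω,
      X n ω = X 0 ω + (∑ i ∈ Finset.range n, X i ω * β i ω) + A n ω + M n ω)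
    (hAle : ∀ n : ℕ, 1 ≤ n → ∀ ω, A n ω ≤ ∑ i ∈ Finset.range n, (ξ i ω - ζ i ω))
    (hAdiff : ∀ n : ℕ, 1 ≤ n → ∀ ω, A n ω - A (n - 1) ω ≤ ξ (n - 1) ω) :
    ∀ᵐ ω ∂μ,
      ((Summable fun i => ξ i ω) ∧ (Summable fun i => β i ω)) →
        ((∃ l : ℝ, Tendsto (fun n => X n ω) atTop (𝓝 l)) ∧ Summable fun i => ζ i ω) :=
  semimartingale_convergence_discrete_general ℱ X β ξ ζ M A hXadp hβadp hξadp hX0 hβ0 hξ0 hζ0 hM hM0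
    hA0 hdecomp hAle hAdiff
end

section
/- In the setting of the preceding decomposition (X_n ≥ 0 adapted integrable, X_n = X_0 + A¹_n − A²_n + M_n with A¹, A² predictable nondecreasing starting at 0 and M a martingale with M_0 = 0, Â_n = Σ_{i=1}^n (1 + X_{i−1} + A²_{i−1})^{−1}(A¹_i − A¹_{i−1})), the following three events coincide up to a P-null set: {A¹_∞ < ∞}, {Σ_{i=1}^∞ (1 + X_{i−1})^{−1}(A¹_i − A¹_{i−1}) < ∞}, and {Â_∞ < ∞}. -/
/-!
Put `Y = 1 + X + A²`, so that `Y = 1 + X₀ + A¹ + M` and `Y ≥ 1`. The weights satisfy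
`(1 + X + A²)⁻¹ ≤ (1 + X)⁻¹ ≤ 1`, which gives `{A¹_∞ < ∞} ⊆ {Σ ΔA¹/(1+X) < ∞} ⊆ {Â_∞ < ∞}`;
it remains to show that `A¹` converges a.s. on `{Â_∞ ≤ c}` for every `c`.

From `log Y_{k+1} - log Y_k ≤ ΔY_k / Y_k` we get `log Y_n - log Y_0 ≤ Â_n + N_n`, where
`N_n = Σ_{k<n} ΔM_k / Y_k` is a martingale transform. Switching the transform off once `Â`
exceeds `c` yields a martingale bounded below by `-(c + log Y_0)`, hence L¹-bounded and a.s.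
convergent. On `{Â_∞ ≤ c}` it coincides with `N`, so `Y` stays bounded by some `K` and
`A¹_n ≤ K Â_n ≤ K c`.
-/

open MeasureTheory Filter Topology Finset

theorem Monotone.exists_tendsto_iff_summable_sub {a : ℕ → ℝ} (ha : Monotone a) :
    (∃ l, Tendsto a atTop (𝓝 l)) ↔ Summable fun i => a (i + 1) - a i := by
  have hd : ∀ i, 0 ≤ a (i + 1) - a i := fun i => sub_nonneg.2 (ha i.le_succ)
  have hpartial : ∀ n, ∑ i ∈ range n, (a (i + 1) - a i) = a n - a 0 := sum_range_sub a
  constructor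
  · rintro ⟨l, hl⟩
    refine ⟨l - a 0, (hasSum_iff_tendsto_nat_of_nonneg hd _).2 ?_⟩
    simpa only [hpartial] using hl.sub_const (a 0)
  · intro hs
    refine ⟨a 0 + ∑' i, (a (i + 1) - a i), ?_⟩
    have := hs.hasSum.tendsto_sum_nat.const_add (a 0)
    simpa only [hpartial, add_sub_cancel] using this

theorem log_sub_log_le_sum_sub_div {y : ℕ → ℝ} (hy : ∀ n, 0 < y n) (n : ℕ) :
    Real.log (y n) - Real.log (y 0) ≤ ∑ k ∈ range n, (y (k + 1) - y k) / y k := by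
  rw [← sum_range_sub (fun k => Real.log (y k))]
  refine sum_le_sum fun k _ => ?_
  rw [← Real.log_div (hy (k + 1)).ne' (hy k).ne', sub_div, div_self (hy k).ne']
  exact Real.log_le_sub_one_of_pos (div_pos (hy (k + 1)) (hy k))

/-- The paper's `Â` when `y = 1 + X + A²` and `a = A¹`. -/
noncomputable def normalizedIncrSum (y a : ℕ → ℝ) (n : ℕ) : ℝ :=
  ∑ i ∈ range n, (y i)⁻¹ * (a (i + 1) - a i)

/-- The transform `Σ Δm_k / y_k` stopped once the normalized sum exceeds `c` (for nondecreasing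
`a` that sum is nondecreasing, so the indicator switches off for good). -/
noncomputable def truncTransform (y a m : ℕ → ℝ) (c : ℝ) (n : ℕ) : ℝ :=
  ∑ k ∈ range n, (if normalizedIncrSum y a (k + 1) ≤ c then (y k)⁻¹ else 0) * (m (k + 1) - m k)

section Deterministic

variable {y a m : ℕ → ℝ} {c : ℝ}

theorem normalizedIncrSum_succ (y a : ℕ → ℝ) (n : ℕ) :
    normalizedIncrSum y a (n + 1) = normalizedIncrSum y a n + (y n)⁻¹ * (a (n + 1) - a n) :=
  sum_range_succ _ n

theorem truncTransform_succ (y a m : ℕ → ℝ) (c : ℝ) (n : ℕ) :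
    truncTransform y a m c (n + 1) = truncTransform y a m c n +
      (if normalizedIncrSum y a (n + 1) ≤ c then (y n)⁻¹ else 0) * (m (n + 1) - m n) :=
  sum_range_succ _ n

theorem monotone_normalizedIncrSum (hy : ∀ n, 0 ≤ y n) (ha : Monotone a) :
    Monotone (normalizedIncrSum y a) :=
  monotone_nat_of_le_succ fun n => by
    rw [normalizedIncrSum_succ]
    exact le_add_of_nonneg_right (mul_nonneg (inv_nonneg.2 (hy n)) (sub_nonneg.2 (ha n.le_succ)))

theorem truncTransform_eq_sum (hy : ∀ n, 0 ≤ y n) (ha : Monotone a) {n : ℕ}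
    (hn : normalizedIncrSum y a n ≤ c) :
    truncTransform y a m c n = ∑ k ∈ range n, (y k)⁻¹ * (m (k + 1) - m k) :=
  sum_congr rfl fun k hk => by
    rw [if_pos ((monotone_normalizedIncrSum hy ha (mem_range.1 hk)).trans hn)]

theorem log_sub_log_le_normalizedIncrSum_add_truncTransform (hy : ∀ n, 0 < y n)
    (ha : Monotone a) (hdec : ∀ n, y n = y 0 + a n + m n) {n : ℕ}
    (hn : normalizedIncrSum y a n ≤ c) :
    Real.log (y n) - Real.log (y 0) ≤ normalizedIncrSum y a n + truncTransform y a m c n := by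
  rw [truncTransform_eq_sum (fun k => (hy k).le) ha hn, normalizedIncrSum, ← sum_add_distrib]
  refine (log_sub_log_le_sum_sub_div hy n).trans_eq (sum_congr rfl fun k _ => ?_)
  rw [hdec (k + 1), hdec k, div_eq_inv_mul]
  ring

theorem neg_add_log_le_truncTransform (hy : ∀ n, 1 ≤ y n) (ha : Monotone a)
    (hdec : ∀ n, y n = y 0 + a n + m n) (hc : 0 ≤ c) (n : ℕ) :
    -(c + Real.log (y 0)) ≤ truncTransform y a m c n := by
  have hlog0 : 0 ≤ Real.log (y 0) := Real.log_nonneg (hy 0)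
  induction n with
  | zero => simp only [truncTransform, range_zero, sum_empty]; linarith
  | succ n ih =>
    by_cases hn : normalizedIncrSum y a (n + 1) ≤ c
    · have := log_sub_log_le_normalizedIncrSum_add_truncTransform
        (fun k => zero_lt_one.trans_le (hy k)) ha hdec (m := m) hn
      linarith [Real.log_nonneg (hy (n + 1))]
    · rwa [truncTransform_succ, if_neg hn, zero_mul, add_zero]

theorem summable_sub_of_le_of_normalizedIncrSum_le {K : ℝ} (hy : ∀ n, 0 < y n)
    (hyK : ∀ n, y n ≤ K) (ha : Monotone a) (hc : ∀ n, normalizedIncrSum y a n ≤ c) :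
    Summable fun i => a (i + 1) - a i := by
  have hd : ∀ i, 0 ≤ a (i + 1) - a i := fun i => sub_nonneg.2 (ha i.le_succ)
  refine summable_of_sum_range_le hd (c := K * c) fun n => ?_
  calc ∑ i ∈ range n, (a (i + 1) - a i)
      = ∑ i ∈ range n, y i * ((y i)⁻¹ * (a (i + 1) - a i)) :=
        sum_congr rfl fun i _ => by rw [mul_inv_cancel_left₀ (hy i).ne']
    _ ≤ ∑ i ∈ range n, K * ((y i)⁻¹ * (a (i + 1) - a i)) :=
        sum_le_sum fun i _ => mul_le_mul_of_nonneg_right (hyK i)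
          (mul_nonneg (inv_nonneg.2 (hy i).le) (hd i))
    _ = K * normalizedIncrSum y a n := (mul_sum ..).symm
    _ ≤ K * c := mul_le_mul_of_nonneg_left (hc n) ((hy 0).le.trans (hyK 0))

theorem summable_sub_of_truncTransform_le {B : ℝ} (hy : ∀ n, 0 < y n) (ha : Monotone a)
    (hdec : ∀ n, y n = y 0 + a n + m n) (hc : ∀ n, normalizedIncrSum y a n ≤ c)
    (hB : ∀ n, truncTransform y a m c n ≤ B) :
    Summable fun i => a (i + 1) - a i := by
  refine summable_sub_of_le_of_normalizedIncrSum_le hy (K := Real.exp (Real.log (y 0) + c + B))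
    (fun n => ?_) ha hc
  have := log_sub_log_le_normalizedIncrSum_add_truncTransform hy ha hdec (hc n)
  rw [← Real.exp_log (hy n)]
  exact Real.exp_le_exp.2 (by linarith [hc n, hB n])

end Deterministic

section Martingale

variable {Ω : Type*} {m : MeasurableSpace Ω} {μ : Measure Ω} [IsFiniteMeasure μ]
  {ℱ : Filtration ℕ m}

theorem MeasureTheory.Martingale.sum_mul_sub {R : ℝ} {ξ f : ℕ → Ω → ℝ}
    (hf : Martingale f ℱ μ) (hξ : StronglyAdapted ℱ ξ) (hbdd : ∀ n ω, ξ n ω ≤ R)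
    (hnonneg : ∀ n ω, 0 ≤ ξ n ω) :
    Martingale (fun n => ∑ k ∈ range n, ξ k * (f (k + 1) - f k)) ℱ μ := by
  have hneg := (hf.neg.submartingale.sum_mul_sub hξ hbdd hnonneg).neg
  refine martingale_iff.2 ⟨?_, hf.submartingale.sum_mul_sub hξ hbdd hnonneg⟩
  convert hneg using 1
  funext n ω
  simp only [Pi.neg_apply, Finset.sum_apply, Pi.mul_apply, Pi.sub_apply, ← sum_neg_distrib]
  exact sum_congr rfl fun k _ => by ring

theorem MeasureTheory.Submartingale.exists_ae_tendsto_of_le {f : ℕ → Ω → ℝ} {g : Ω → ℝ}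
    (hf : Submartingale f ℱ μ) (hg : Integrable g μ) (hfg : ∀ n ω, f n ω ≤ g ω) :
    ∀ᵐ ω ∂μ, ∃ c, Tendsto (fun n => f n ω) atTop (𝓝 c) := by
  set R := 2 * ∫ ω, |g ω| ∂μ - ∫ ω, f 0 ω ∂μ
  have hnorm : ∀ n, ∫ ω, ‖f n ω‖ ∂μ ≤ R := fun n => by
    have hint := hf.integrable n
    have habs : ∀ ω, ‖f n ω‖ ≤ 2 * |g ω| - f n ω := fun ω => by
      rw [Real.norm_eq_abs]
      cases abs_cases (f n ω) <;> linarith [hfg n ω, le_abs_self (g ω), abs_nonneg (g ω)]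
    calc ∫ ω, ‖f n ω‖ ∂μ ≤ ∫ ω, (2 * |g ω| - f n ω) ∂μ :=
          integral_mono hint.norm (hg.abs.const_mul 2 |>.sub hint) habs
      _ = 2 * ∫ ω, |g ω| ∂μ - ∫ ω, f n ω ∂μ := by
          rw [integral_sub (hg.abs.const_mul 2) hint, integral_const_mul]
      _ ≤ R := by
          have := hf.setIntegral_le n.zero_le MeasurableSet.univ
          rw [setIntegral_univ, setIntegral_univ] at this
          linarith
  refine hf.exists_ae_tendsto_of_bdd (R := R.toNNReal) fun n => ?_
  rw [eLpNorm_one_eq_lintegral_enorm, ← ofReal_integral_norm_eq_lintegral_enorm (hf.integrable n)]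
  exact ENNReal.ofReal_le_ofReal (hnorm n)

variable {Y A M : ℕ → Ω → ℝ}

theorem measurable_normalizedIncrSum (hY : StronglyAdapted ℱ Y)
    (hA : IsStronglyPredictable ℱ A) (n : ℕ) :
    Measurable[ℱ n] fun ω => normalizedIncrSum (Y · ω) (A · ω) (n + 1) := by
  refine Finset.measurable_sum _ fun i hi => ?_
  have hin : i ≤ n := Nat.lt_succ_iff.1 (mem_range.1 hi)
  exact ((hY i).measurable.mono (ℱ.mono hin) le_rfl).inv.mul
    (((hA.measurable_add_one i).measurable.mono (ℱ.mono hin) le_rfl).sub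
      ((hA.stronglyAdapted i).measurable.mono (ℱ.mono hin) le_rfl))

theorem martingale_truncTransform (hM : Martingale M ℱ μ) (hY : StronglyAdapted ℱ Y)
    (hY1 : ∀ n ω, 1 ≤ Y n ω) (hA : IsStronglyPredictable ℱ A) (c : ℝ) :
    Martingale (fun n ω => truncTransform (Y · ω) (A · ω) (M · ω) c n) ℱ μ := by
  set ξ : ℕ → Ω → ℝ := fun k ω =>
    if normalizedIncrSum (Y · ω) (A · ω) (k + 1) ≤ c then (Y k ω)⁻¹ else 0
  have hξ : StronglyAdapted ℱ ξ := fun k =>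
    (Measurable.ite (measurableSet_le (measurable_normalizedIncrSum hY hA k) measurable_const)
      (hY k).measurable.inv measurable_const).stronglyMeasurable
  have hξ1 : ∀ k ω, ξ k ω ≤ 1 := fun k ω => by
    simp only [ξ]; split_ifs
    exacts [inv_le_one_of_one_le₀ (hY1 k ω), zero_le_one]
  have hξ0 : ∀ k ω, 0 ≤ ξ k ω := fun k ω => by
    simp only [ξ]; split_ifs
    exacts [inv_nonneg.2 (zero_le_one.trans (hY1 k ω)), le_rfl]
  convert hM.sum_mul_sub hξ hξ1 hξ0 using 1
  funext n ω
  simp only [truncTransform, Finset.sum_apply, Pi.mul_apply, Pi.sub_apply, ξ]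

theorem ae_summable_sub_of_normalizedIncrSum_le (hM : Martingale M ℱ μ)
    (hY : StronglyAdapted ℱ Y) (hY1 : ∀ n ω, 1 ≤ Y n ω) (hY0 : Integrable (Y 0) μ)
    (hA : IsStronglyPredictable ℱ A) (hAmono : ∀ ω, Monotone fun n => A n ω)
    (hdec : ∀ n ω, Y n ω = Y 0 ω + A n ω + M n ω) {c : ℝ} (hc : 0 ≤ c) :
    ∀ᵐ ω ∂μ, (∀ n, normalizedIncrSum (Y · ω) (A · ω) n ≤ c) →
      Summable fun i => A (i + 1) ω - A i ω := by
  have hN := martingale_truncTransform hM hY hY1 hA c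
  have hNbdd : ∀ n ω, -truncTransform (Y · ω) (A · ω) (M · ω) c n ≤ c + Y 0 ω := fun n ω => by
    have := neg_add_log_le_truncTransform (hY1 · ω) (hAmono ω) (hdec · ω) hc n
    have := Real.log_le_sub_one_of_pos (zero_lt_one.trans_le (hY1 0 ω))
    linarith
  have hconv := hN.neg.submartingale.exists_ae_tendsto_of_le (g := fun ω => c + Y 0 ω)
    ((integrable_const c).add hY0) hNbdd
  filter_upwards [hconv] with ω ⟨l, hl⟩ hbdd
  obtain ⟨B, hB⟩ := hl.neg.bddAbove_range
  have hNle : ∀ n, truncTransform (Y · ω) (A · ω) (M · ω) c n ≤ B := fun n => by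
    simpa only [Pi.neg_apply, neg_neg] using hB ⟨n, rfl⟩
  exact summable_sub_of_truncTransform_le (y := (Y · ω)) (a := (A · ω)) (m := (M · ω))
    (fun n => zero_lt_one.trans_le (hY1 n ω)) (hAmono ω) (hdec · ω) hbdd hNle

theorem ae_summable_sub_of_summable_inv_mul_sub (hM : Martingale M ℱ μ)
    (hY0 : StronglyMeasurable[ℱ 0] (Y 0)) (hY0int : Integrable (Y 0) μ) (hY1 : ∀ n ω, 1 ≤ Y n ω)
    (hA : IsStronglyPredictable ℱ A) (hAmono : ∀ ω, Monotone fun n => A n ω)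
    (hdec : ∀ n ω, Y n ω = Y 0 ω + A n ω + M n ω) :
    ∀ᵐ ω ∂μ, (Summable fun i => (Y i ω)⁻¹ * (A (i + 1) ω - A i ω)) →
      Summable fun i => A (i + 1) ω - A i ω := by
  have hY : StronglyAdapted ℱ Y := fun n => by
    rw [show Y n = Y 0 + A n + M n from funext (hdec n)]
    exact ((hY0.mono (ℱ.mono n.zero_le)).add (hA.stronglyAdapted n)).add (hM.stronglyAdapted n)
  have hlevels := ae_all_iff.2 fun c : ℕ =>
    ae_summable_sub_of_normalizedIncrSum_le hM hY hY1 hY0int hA hAmono hdec c.cast_nonneg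
  filter_upwards [hlevels] with ω hω hsum
  refine hω ⌈∑' i, (Y i ω)⁻¹ * (A (i + 1) ω - A i ω)⌉₊ fun n => ?_
  refine (hsum.sum_le_tsum (range n) (fun i _ => ?_)).trans (Nat.le_ceil _)
  exact mul_nonneg (inv_nonneg.2 (zero_le_one.trans (hY1 i ω))) (sub_nonneg.2 (hAmono ω i.le_succ))

end Martingale

theorem convergence_sets_coincide_discrete_general
    {Ω : Type*} {m : MeasurableSpace Ω} {μ : Measure Ω} [IsProbabilityMeasure μ]
    (ℱ : Filtration ℕ m)
    (X M A1 A2 : ℕ → Ω → ℝ)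
    (hXadp : Adapted ℱ X) (hX0 : ∀ n ω, 0 ≤ X n ω) (hXint : ∀ n, Integrable (X n) μ)
    (hA1mono : ∀ ω, Monotone fun n => A1 n ω) (hA2mono : ∀ ω, Monotone fun n => A2 n ω)
    (hA10 : ∀ ω, A1 0 ω = 0) (hA20 : ∀ ω, A2 0 ω = 0)
    (hA1pred : ∀ n : ℕ, StronglyMeasurable[ℱ n] (A1 (n + 1)))
    (hM : Martingale M ℱ μ)
    (hdecomp : ∀ n ω, X n ω = X 0 ω + A1 n ω - A2 n ω + M n ω) :
    ∀ᵐ ω ∂μ,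
      ((∃ l : ℝ, Tendsto (fun n => A1 n ω) atTop (𝓝 l)) ↔
        Summable fun i => (1 + X i ω)⁻¹ * (A1 (i + 1) ω - A1 i ω)) ∧
      ((Summable fun i => (1 + X i ω)⁻¹ * (A1 (i + 1) ω - A1 i ω)) ↔
        Summable fun i => (1 + X i ω + A2 i ω)⁻¹ * (A1 (i + 1) ω - A1 i ω)) := by
  have hA2 : ∀ n ω, 0 ≤ A2 n ω := fun n ω => hA20 ω ▸ hA2mono ω n.zero_le
  have hA1 : IsStronglyPredictable ℱ A1 := .of_measurable_add_one
    (by simp only [show A1 0 = 0 from funext hA10]; exact stronglyMeasurable_const) hA1pred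
  have key := ae_summable_sub_of_summable_inv_mul_sub (Y := fun n ω => 1 + X n ω + A2 n ω) hM
    (by simp only [hA20, add_zero]; exact ((hXadp 0).const_add 1).stronglyMeasurable)
    (by simp only [hA20, add_zero]; exact (integrable_const 1).add (hXint 0))
    (fun n ω => by linarith [hX0 n ω, hA2 n ω]) hA1 hA1mono
    (fun n ω => by rw [hdecomp n ω, hA20]; ring)
  filter_upwards [key] with ω hω
  set d := fun i => A1 (i + 1) ω - A1 i ω
  have hd : ∀ i, 0 ≤ d i := fun i => sub_nonneg.2 (hA1mono ω i.le_succ)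
  have hweightX : Summable d → Summable fun i => (1 + X i ω)⁻¹ * d i := fun h =>
    h.of_nonneg_of_le (fun i => mul_nonneg (inv_nonneg.2 (by linarith [hX0 i ω])) (hd i))
      fun i => mul_le_of_le_one_left (hd i) (inv_le_one_of_one_le₀ (by linarith [hX0 i ω]))
  have hweightXA : (Summable fun i => (1 + X i ω)⁻¹ * d i) →
      Summable fun i => (1 + X i ω + A2 i ω)⁻¹ * d i := fun h =>
    h.of_nonneg_of_le (fun i => mul_nonneg (inv_nonneg.2 (by linarith [hX0 i ω, hA2 i ω])) (hd i))
      fun i => mul_le_mul_of_nonneg_right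
        (inv_anti₀ (by linarith [hX0 i ω]) (by linarith [hA2 i ω])) (hd i)
  rw [(hA1mono ω).exists_tendsto_iff_summable_sub]
  exact ⟨⟨hweightX, fun h => hω (hweightXA h)⟩, ⟨hweightXA, fun h => hweightX (hω h)⟩⟩

/-- Discrete-time form of Corollary 1.1: in the decomposition
`X_n = X_0 + A¹_n − A²_n + M_n` (with `X ≥ 0` adapted integrable, `A¹, A²` predictable
nondecreasing starting at `0`, `M` a martingale with `M_0 = 0`), the events `{A¹_∞ < ∞}`,
`{Σ (1 + X_{i−1})⁻¹ (A¹_i − A¹_{i−1}) < ∞}` and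
`{Σ (1 + X_{i−1} + A²_{i−1})⁻¹ (A¹_i − A¹_{i−1}) < ∞}` coincide up to a `P`-null set. -/
theorem convergence_sets_coincide_discrete
    {Ω : Type*} {m : MeasurableSpace Ω} {μ : Measure Ω} [IsProbabilityMeasure μ]
    (ℱ : Filtration ℕ m)
    (X M A1 A2 : ℕ → Ω → ℝ)
    (hXadp : Adapted ℱ X) (hX0 : ∀ n ω, 0 ≤ X n ω) (hXint : ∀ n, Integrable (X n) μ)
    (hA1mono : ∀ ω, Monotone fun n => A1 n ω) (hA2mono : ∀ ω, Monotone fun n => A2 n ω)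
    (hA10 : ∀ ω, A1 0 ω = 0) (hA20 : ∀ ω, A2 0 ω = 0)
    (hA1pred : ∀ n : ℕ, StronglyMeasurable[ℱ n] (A1 (n + 1)))
    (hA2pred : ∀ n : ℕ, StronglyMeasurable[ℱ n] (A2 (n + 1)))
    (hM : Martingale M ℱ μ) (hM0 : ∀ ω, M 0 ω = 0)
    (hdecomp : ∀ n ω, X n ω = X 0 ω + A1 n ω - A2 n ω + M n ω) :
    ∀ᵐ ω ∂μ,
      ((∃ l : ℝ, Tendsto (fun n => A1 n ω) atTop (𝓝 l)) ↔
        Summable fun i => (1 + X i ω)⁻¹ * (A1 (i + 1) ω - A1 i ω)) ∧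
      ((Summable fun i => (1 + X i ω)⁻¹ * (A1 (i + 1) ω - A1 i ω)) ↔
        Summable fun i => (1 + X i ω + A2 i ω)⁻¹ * (A1 (i + 1) ω - A1 i ω)) :=
  convergence_sets_coincide_discrete_general ℱ X M A1 A2 hXadp hX0 hXint hA1mono hA2mono hA10 hA20
    hA1pred hM hdecomp
end

section
/- Let γ: [0,∞) → (0,∞) be a nondecreasing right-continuous function with γ_0 = 1. Denote Δγ_s = γ_s − γ_{s−} (with γ_{0−} = 1), and let γ^c_t = γ_t − Σ_{0<s≤t} Δγ_s be its continuous part. Then for every δ with 0 < δ < 1 and every t ≥ 0: γ_t^δ = exp( δ ∫_{(0,t]} γ_s^{−1} dγ^c_s ) · Π_{0<s≤t} (1 − Δγ_s/γ_s)^{−δ}, where the (countable) product is over the jump times of γ in (0,t]. -/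
/-!
The density of `d(log γ)` with respect to `dγ` is the slope of `log` across the jump,
`logSlope (γ s-) (γ s)`: it is `1 / γ s` where `γ` is continuous, and it makes the atom at a jump
time carry exactly `log γ s - log γ s-`. So everything reduces to
`log γ b - log γ a = ∫_{(a,b]} logSlope (γ s-) (γ s) dγ`. On an open interval `(u, v)` both the
increment of `log γ` and this integral lie between `Δ / γ v-` and `Δ / γ u`, with `Δ = γ v- - γ u`,
so their difference `D` satisfies `|D v - D u| ≤ C Δ²`. A function with this property is constant:
it is left-continuous, and right-continuity of `γ` lets one climb to the right from any point while
losing at most `ε` times the increment of `γ`.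
-/

open MeasureTheory Set Filter Topology
open Function (leftLim)

noncomputable def logSlope (x y : ℝ) : ℝ :=
  if x = y then x⁻¹ else (Real.log y - Real.log x) / (y - x)

theorem logSlope_self (x : ℝ) : logSlope x x = x⁻¹ := if_pos rfl

theorem logSlope_mul_sub (x y : ℝ) : logSlope x y * (y - x) = Real.log y - Real.log x := by
  unfold logSlope
  split_ifs with h
  · simp [h]
  · exact div_mul_cancel₀ _ (sub_ne_zero.2 (Ne.symm h))

theorem log_sub_log_mem_Icc {x y : ℝ} (hx : 0 < x) (hxy : x ≤ y) :
    Real.log y - Real.log x ∈ Icc ((y - x) / y) ((y - x) / x) := by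
  have hy : 0 < y := hx.trans_le hxy
  have hyx : 0 < y / x := div_pos hy hx
  rw [← Real.log_div hy.ne' hx.ne']
  constructor
  · calc (y - x) / y = 1 - (y / x)⁻¹ := by field_simp
      _ ≤ _ := Real.one_sub_inv_le_log_of_pos hyx
  · calc _ ≤ y / x - 1 := Real.log_le_sub_one_of_pos hyx
      _ = (y - x) / x := by field_simp

theorem logSlope_mem_Icc {x y : ℝ} (hx : 0 < x) (hxy : x ≤ y) : logSlope x y ∈ Icc y⁻¹ x⁻¹ := by
  rcases hxy.eq_or_lt with rfl | hlt
  · simp [logSlope_self]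
  have h := log_sub_log_mem_Icc hx hxy
  rw [logSlope, if_neg hlt.ne, mem_Icc, le_div_iff₀ (sub_pos.2 hlt), div_le_iff₀ (sub_pos.2 hlt)]
  rwa [inv_mul_eq_div, inv_mul_eq_div]

namespace StieltjesFunction

variable (f : StieltjesFunction ℝ)

theorem measurable_logSlope_leftLim : Measurable fun s => logSlope (leftLim f s) (f s) := by
  have hl : Measurable (leftLim f) := f.mono.leftLim.measurable
  have hf : Measurable f := f.mono.measurable
  unfold logSlope
  exact Measurable.ite (measurableSet_eq_fun hl hf) (by fun_prop) (by fun_prop)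

variable {f}

theorem logSlope_leftLim_mem_Icc {u s : ℝ} (hu : 0 < f u) (hus : u < s) :
    logSlope (leftLim f s) (f s) ∈ Icc (f s)⁻¹ (f u)⁻¹ := by
  have hul : f u ≤ leftLim f s := f.mono.le_leftLim hus
  have h := logSlope_mem_Icc (hu.trans_le hul) (f.mono.leftLim_le le_rfl)
  exact ⟨h.1, h.2.trans (inv_anti₀ hu hul)⟩

theorem integrableOn_logSlope_leftLim {u v : ℝ} (hu : 0 < f u) :
    IntegrableOn (fun s => logSlope (leftLim f s) (f s)) (Ioc u v) f.measure := by
  refine IntegrableOn.of_bound (by simp [f.measure_Ioc])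
    f.measurable_logSlope_leftLim.aestronglyMeasurable (f u)⁻¹ ?_
  refine (ae_restrict_mem measurableSet_Ioc).mono fun s hs => ?_
  have h := logSlope_leftLim_mem_Icc hu hs.1
  rw [Real.norm_of_nonneg ((inv_nonneg.2 (hu.le.trans (f.mono hs.1.le))).trans h.1)]
  exact h.2

theorem setIntegral_logSlope_leftLim_singleton (w : ℝ) :
    ∫ s in {w}, logSlope (leftLim f s) (f s) ∂f.measure =
      Real.log (f w) - Real.log (leftLim f w) := by
  rw [integral_singleton, measureReal_def, f.measure_singleton,
    ENNReal.toReal_ofReal (sub_nonneg.2 (f.mono.leftLim_le le_rfl)), smul_eq_mul, mul_comm,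
    logSlope_mul_sub]

theorem setIntegral_logSlope_leftLim_Ioo_mem_Icc {u v : ℝ} (hu : 0 < f u) (huv : u < v) :
    ∫ s in Ioo u v, logSlope (leftLim f s) (f s) ∂f.measure ∈
      Icc ((leftLim f v - f u) / leftLim f v) ((leftLim f v - f u) / f u) := by
  have hint : IntegrableOn (fun s => logSlope (leftLim f s) (f s)) (Ioo u v) f.measure :=
    (integrableOn_logSlope_leftLim (v := v) hu).mono_set Ioo_subset_Ioc_self
  have hmeas : f.measure.real (Ioo u v) = leftLim f v - f u := by
    rw [measureReal_def, f.measure_Ioo,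
      ENNReal.toReal_ofReal (sub_nonneg.2 (f.mono.le_leftLim huv))]
  constructor
  · calc (leftLim f v - f u) / leftLim f v = ∫ _ in Ioo u v, (leftLim f v)⁻¹ ∂f.measure := by
          rw [setIntegral_const, hmeas, smul_eq_mul, div_eq_mul_inv]
      _ ≤ _ := setIntegral_mono_on (integrableOn_const (by simp [f.measure_Ioo])) hint
          measurableSet_Ioo fun s hs =>
            (inv_anti₀ (hu.trans_le (f.mono hs.1.le)) (f.mono.le_leftLim hs.2)).trans
              (logSlope_leftLim_mem_Icc hu hs.1).1
  · calc _ ≤ ∫ _ in Ioo u v, (f u)⁻¹ ∂f.measure :=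
          setIntegral_mono_on hint (integrableOn_const (by simp [f.measure_Ioo])) measurableSet_Ioo
            fun s hs => (logSlope_leftLim_mem_Icc hu hs.1).2
      _ = (leftLim f v - f u) / f u := by
          rw [setIntegral_const, hmeas, smul_eq_mul, div_eq_mul_inv]

theorem abs_log_sub_log_sub_integral_logSlope_le {u v : ℝ} (hu : 0 < f u) (huv : u < v) :
    |Real.log (f v) - Real.log (f u) - ∫ s in Ioc u v, logSlope (leftLim f s) (f s) ∂f.measure|
      ≤ ((leftLim f v - f u) / f u) ^ 2 := by
  have hul : f u ≤ leftLim f v := f.mono.le_leftLim huv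
  have hL : 0 < leftLim f v := hu.trans_le hul
  have hsplit : ∫ s in Ioc u v, logSlope (leftLim f s) (f s) ∂f.measure =
      ∫ s in Ioo u v, logSlope (leftLim f s) (f s) ∂f.measure
        + (Real.log (f v) - Real.log (leftLim f v)) := by
    rw [← Ioo_union_right huv, setIntegral_union (by simp) (measurableSet_singleton v)
      ((integrableOn_logSlope_leftLim hu).mono_set Ioo_subset_Ioc_self)
      ((integrableOn_logSlope_leftLim (v := v) hu).mono_set (by simpa using huv)),
      setIntegral_logSlope_leftLim_singleton]
  have hIoo := setIntegral_logSlope_leftLim_Ioo_mem_Icc hu huv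
  have hlog := log_sub_log_mem_Icc hu hul
  rw [hsplit]
  calc _ ≤ (leftLim f v - f u) / f u - (leftLim f v - f u) / leftLim f v :=
        abs_sub_le_iff.2 ⟨by linarith [hlog.2, hIoo.1], by linarith [hlog.1, hIoo.2]⟩
    _ = ((leftLim f v - f u) / f u) ^ 2 * (f u / leftLim f v) := by
        field_simp
    _ ≤ ((leftLim f v - f u) / f u) ^ 2 :=
        mul_le_of_le_one_right (sq_nonneg _) ((div_le_one hL).2 hul)

variable {D : ℝ → ℝ} {C a b : ℝ}

theorem tendsto_nhdsLT_of_abs_sub_le_sq_leftLim_sub {w : ℝ} (haw : a < w)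
    (hD : ∀ u, a ≤ u → u < w → |D w - D u| ≤ C * (leftLim f w - f u) ^ 2) :
    Tendsto D (𝓝[<] w) (𝓝 (D w)) := by
  have hlim : Tendsto (fun u => C * (leftLim f w - f u) ^ 2) (𝓝[<] w) (𝓝 0) := by
    simpa using ((f.mono.tendsto_leftLim w).const_sub (leftLim f w)).pow 2 |>.const_mul C
  refine tendsto_iff_norm_sub_tendsto_zero.2 (squeeze_zero_norm' ?_ hlim)
  filter_upwards [Ioo_mem_nhdsLT haw] with u hu
  simp only [Real.norm_eq_abs, abs_abs]
  rw [abs_sub_comm]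
  exact hD u hu.1.le hu.2

theorem abs_sub_le_mul_of_abs_sub_le_sq_leftLim_sub (hC : 0 ≤ C) (hab : a ≤ b)
    (hD : ∀ u v, a ≤ u → u < v → v ≤ b → |D v - D u| ≤ C * (leftLim f v - f u) ^ 2)
    {ε : ℝ} (hε : 0 < ε) : |D b - D a| ≤ ε * (f b - f a) := by
  set S := {v ∈ Icc a b | |D v - D a| ≤ ε * (f v - f a)}
  have haS : a ∈ S := ⟨⟨le_rfl, hab⟩, by simp⟩
  have hlub : IsLUB S (sSup S) := isLUB_csSup ⟨a, haS⟩ ⟨b, fun v hv => hv.1.2⟩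
  set w := sSup S
  have haw : a ≤ w := hlub.1 haS
  have hwb : w ≤ b := hlub.2 fun v hv => hv.1.2
  have hwS : w ∈ S := by
    rcases haw.eq_or_lt with haw | haw
    · exact haw ▸ haS
    refine ⟨⟨haw.le, hwb⟩, ?_⟩
    have hcont : Tendsto D (𝓝[≤] w) (𝓝 (D w)) :=
      (continuousWithinAt_Iio_iff_Iic.1 (tendsto_nhdsLT_of_abs_sub_le_sq_leftLim_sub haw
        fun u hau huw => hD u w hau huw hwb))
    have hfreq : ∃ᶠ v in 𝓝[≤] w, D v ∈ Metric.closedBall (D a) (ε * (f w - f a)) :=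
      ((hlub.frequently_mem ⟨a, haS⟩).and_eventually self_mem_nhdsWithin).mono
        fun v ⟨hvS, hvw⟩ => by
          rw [Metric.mem_closedBall, Real.dist_eq]
          exact hvS.2.trans (by gcongr)
    simpa [Real.dist_eq] using Metric.isClosed_closedBall.mem_of_frequently_of_tendsto hfreq hcont
  refine hwb.eq_or_lt.elim (fun h => h ▸ hwS.2) fun hwb => absurd ?_ (lt_irrefl w)
  have hright : Tendsto (fun v => C * (f v - f w)) (𝓝[>] w) (𝓝 0) := by
    simpa using (((f.right_continuous w).tendsto.mono_left
      (nhdsWithin_mono w Ioi_subset_Ici_self)).sub_const (f w)).const_mul C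
  obtain ⟨v, hvε, hv⟩ := ((hright.eventually_lt_const hε).and (Ioc_mem_nhdsGT hwb)).exists
  refine hv.1.trans_le (hlub.1 ⟨⟨haw.trans hv.1.le, hv.2⟩, ?_⟩)
  have hwv := hD w v haw hv.1 hv.2
  have hlw : f w ≤ leftLim f v := f.mono.le_leftLim hv.1
  have hlv : leftLim f v ≤ f v := f.mono.leftLim_le le_rfl
  calc |D v - D a| ≤ |D v - D w| + |D w - D a| := abs_sub_le _ _ _
    _ ≤ ε * (f v - f w) + ε * (f w - f a) := by
        refine add_le_add (hwv.trans ?_) hwS.2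
        nlinarith [mul_le_mul_of_nonneg_left hlv hC]
    _ = ε * (f v - f a) := by ring

theorem eq_of_abs_sub_le_sq_leftLim_sub (hC : 0 ≤ C) (hab : a ≤ b)
    (hD : ∀ u v, a ≤ u → u < v → v ≤ b → |D v - D u| ≤ C * (leftLim f v - f u) ^ 2) :
    D b = D a := by
  refine eq_of_abs_sub_nonpos (le_of_forall_pos_le_add fun η hη => ?_)
  have hK : 0 ≤ f b - f a := sub_nonneg.2 (f.mono hab)
  calc |D b - D a| ≤ η / (f b - f a + 1) * (f b - f a) :=
        abs_sub_le_mul_of_abs_sub_le_sq_leftLim_sub hC hab hD (by positivity)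
    _ ≤ 0 + η := by
        rw [zero_add, div_mul_eq_mul_div, div_le_iff₀ (by positivity)]
        nlinarith

theorem log_sub_log_eq_integral_logSlope (ha : 0 < f a) (hab : a ≤ b) :
    Real.log (f b) - Real.log (f a) =
      ∫ s in Ioc a b, logSlope (leftLim f s) (f s) ∂f.measure := by
  set D : ℝ → ℝ := fun v =>
    Real.log (f v) - Real.log (f a) - ∫ s in Ioc a v, logSlope (leftLim f s) (f s) ∂f.measure
  suffices D b = D a by simpa [D, sub_eq_zero] using this
  refine f.eq_of_abs_sub_le_sq_leftLim_sub (C := (f a ^ 2)⁻¹) (by positivity) hab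
    fun u v hau huv hvb => ?_
  have hu : 0 < f u := ha.trans_le (f.mono hau)
  have hDvu : D v - D u = Real.log (f v) - Real.log (f u) -
      ∫ s in Ioc u v, logSlope (leftLim f s) (f s) ∂f.measure := by
    simp only [D, ← Ioc_union_Ioc_eq_Ioc hau huv.le]
    rw [setIntegral_union (Ioc_disjoint_Ioc_of_le le_rfl) measurableSet_Ioc
      (integrableOn_logSlope_leftLim ha) (integrableOn_logSlope_leftLim hu)]
    ring
  calc |D v - D u| ≤ ((leftLim f v - f u) / f u) ^ 2 :=
        hDvu ▸ abs_log_sub_log_sub_integral_logSlope_le hu huv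
    _ ≤ (f a ^ 2)⁻¹ * (leftLim f v - f u) ^ 2 := by
        rw [div_pow, div_eq_inv_mul]
        gcongr

theorem log_sub_log_eq_integral_add_tsum (ha : 0 < f a) (hab : a ≤ b) :
    Real.log (f b) - Real.log (f a) =
      ∫ s in Ioc a b ∩ {s | leftLim f s = f s}, (f s)⁻¹ ∂f.measure +
        ∑' s : ↥(Ioc a b ∩ {s | leftLim f s ≠ f s}),
          (Real.log (f s) - Real.log (leftLim f s)) := by
  have hint := integrableOn_logSlope_leftLim (v := b) ha
  rw [log_sub_log_eq_integral_logSlope ha hab, ← integral_inter_add_sdiff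
    (measurableSet_eq_fun f.mono.leftLim.measurable f.mono.measurable) hint]
  congr 1
  · refine setIntegral_congr_fun ((measurableSet_Ioc).inter
      (measurableSet_eq_fun f.mono.leftLim.measurable f.mono.measurable)) fun s hs => ?_
    rw [show leftLim f s = f s from hs.2, logSlope_self]
  · change ∫ s in Ioc a b ∩ {s | leftLim f s ≠ f s}, _ ∂_ = _
    rw [setIntegral_countable _ (f.countable_leftLim_ne.mono inter_subset_right)
      (hint.mono_set inter_subset_left)]
    exact tsum_congr fun s =>
      (integral_singleton _ _).symm.trans (setIntegral_logSlope_leftLim_singleton _)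

end StieltjesFunction

theorem rpow_eq_doleans_exponential_general (γ : StieltjesFunction ℝ)
    (hγflat : ∀ t : ℝ, t ≤ 0 → γ t = 1)
    (δ : ℝ) (t : ℝ) (ht : 0 ≤ t) :
    γ t ^ δ =
      Real.exp (δ * ∫ s in Ioc 0 t ∩ {s | Function.leftLim γ s = γ s}, (γ s)⁻¹ ∂γ.measure) *
        Real.exp (-δ * ∑' s : ↥(Ioc 0 t ∩ {s | Function.leftLim γ s ≠ γ s}),
          Real.log (1 - (γ s.1 - Function.leftLim γ s.1) / γ s.1)) := by
  have hγ0 : γ 0 = 1 := hγflat 0 le_rfl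
  have hlog := γ.log_sub_log_eq_integral_add_tsum (hγ0 ▸ one_pos) ht
  rw [hγ0, Real.log_one, sub_zero] at hlog
  have hjump (s : ↥(Ioc 0 t ∩ {s | leftLim γ s ≠ γ s})) :
      Real.log (1 - (γ s - leftLim γ s) / γ s) = -(Real.log (γ s) - Real.log (leftLim γ s)) := by
    have hl : 0 < leftLim γ s := one_pos.trans_le (hγ0 ▸ γ.mono.le_leftLim s.2.1.1)
    have hs : 0 < γ s := hl.trans_le (γ.mono.leftLim_le le_rfl)
    rw [one_sub_div hs.ne', sub_sub_cancel, Real.log_div hl.ne' hs.ne', neg_sub]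
  rw [tsum_congr hjump, tsum_neg, ← Real.exp_add,
    Real.rpow_def_of_pos (one_pos.trans_le (hγ0 ▸ γ.mono ht)), hlog]
  ring_nf

/-- Lemma 2.1: for a nondecreasing right-continuous `γ` with `γ ≡ 1` on `(−∞,0]` (so `γ_0 = 1`
and `γ_{0−} = 1`), and every `0 < δ < 1` and `t ≥ 0`,
`γ_t^δ = exp( δ ∫_{(0,t]} γ_s^{−1} dγ^c_s ) · Π_{0<s≤t} (1 − Δγ_s/γ_s)^{−δ}`.
The continuous-part integral is the integral of `γ⁻¹` with respect to the Stieltjes measure of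
`γ` over the non-jump points, and the product over the (countably many) jump times is written as
the exponential of `−δ` times the sum of the logarithms `log(1 − Δγ_s/γ_s)`. -/
theorem rpow_eq_doleans_exponential (γ : StieltjesFunction ℝ)
    (hγflat : ∀ t : ℝ, t ≤ 0 → γ t = 1)
    (δ : ℝ) (hδ0 : 0 < δ) (hδ1 : δ < 1) (t : ℝ) (ht : 0 ≤ t) :
    γ t ^ δ =
      Real.exp (δ * ∫ s in Ioc 0 t ∩ {s | Function.leftLim γ s = γ s}, (γ s)⁻¹ ∂γ.measure) *
        Real.exp (-δ * ∑' s : ↥(Ioc 0 t ∩ {s | Function.leftLim γ s ≠ γ s}),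
          Real.log (1 - (γ s.1 - Function.leftLim γ s.1) / γ s.1)) :=
  rpow_eq_doleans_exponential_general γ hγflat δ t ht
end

section
/- Let B: [0,∞) → [0,∞) be a continuous nondecreasing function with B_0 = 0 and let Λ: [0,∞) → ℝ be a nondecreasing right-continuous function. Then for every t ≥ 0: ∫₀ᵗ (B_t − B_s)² dΛ_s = 2 ∫₀ᵗ ( ∫₀ˢ (Λ_u − Λ_0) dB_u ) dB_s, where dΛ_s denotes the Lebesgue–Stieltjes measure of Λ on (0,t]. -/
open MeasureTheory Set Filter Topology

open scoped ENNReal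

/-!
Write `μ = dB`, which has no atoms because `B` is continuous, and `ν = dΛ`; since both
integrands are nonnegative, the identity reduces to one between `ℝ≥0∞`-valued integrals.
Integrating `μ(s, t] = μ(s, u) + μ(u, t]` in `dμ(u)` over `(s, t]` and exchanging the
order of integration in the first term gives `μ(s, t]² = 2 ∫_{(s,t]} μ(u, t] dμ(u)`.
Integrating this in `dν(s)` over `(a, t]` and exchanging the order of integration turns the
left side into `2 ∫_{(a,t]} μ(u, t] ν(a, u) dμ(u)`, while exchanging the order on the right
side gives `2 ∫_{(a,t]} ν(a, u] μ[u, t] dμ(u)`. These agree because `μ` does not charge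
points, and `ν(a, u) = ν(a, u]` off the countably many atoms of `ν`, a `μ`-null set.
-/

section Tonelli

variable {α β : Type*} [MeasurableSpace α] [MeasurableSpace β] {μ : Measure α} {ν : Measure β}

theorem setLIntegral_setLIntegral_eq_lintegral_lintegral_indicator {S : Set α}
    {I : α → Set β} {E : Set (α × β)} (hS : MeasurableSet S) (hI : ∀ x, MeasurableSet (I x))
    (hE : ∀ x y, (x, y) ∈ E ↔ x ∈ S ∧ y ∈ I x) (f : α → β → ℝ≥0∞) :
    ∫⁻ x in S, ∫⁻ y in I x, f x y ∂ν ∂μ =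
      ∫⁻ x, ∫⁻ y, E.indicator (Function.uncurry f) (x, y) ∂ν ∂μ := by
  rw [← lintegral_indicator hS]
  refine lintegral_congr fun x => ?_
  by_cases hx : x ∈ S
  · rw [indicator_of_mem hx, ← lintegral_indicator (hI x)]
    refine lintegral_congr fun y => ?_
    by_cases hy : y ∈ I x <;> simp [hE, hx, hy]
  · simp [hE, hx]

theorem setLIntegral_setLIntegral_swap [SFinite μ] [SFinite ν] {S : Set α} {T : Set β}
    {I : α → Set β} {J : β → Set α} (hS : MeasurableSet S) (hT : MeasurableSet T)
    (hI : ∀ x, MeasurableSet (I x)) (hJ : ∀ y, MeasurableSet (J y))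
    (hE : MeasurableSet {p : α × β | p.1 ∈ S ∧ p.2 ∈ I p.1})
    (hIJ : ∀ x y, x ∈ S ∧ y ∈ I x ↔ y ∈ T ∧ x ∈ J y) {f : α → β → ℝ≥0∞}
    (hf : Measurable (Function.uncurry f)) :
    ∫⁻ x in S, ∫⁻ y in I x, f x y ∂ν ∂μ = ∫⁻ y in T, ∫⁻ x in J y, f x y ∂μ ∂ν := by
  set E := {p : α × β | p.1 ∈ S ∧ p.2 ∈ I p.1}
  rw [setLIntegral_setLIntegral_eq_lintegral_lintegral_indicator (E := E) hS hI
      (fun _ _ => Iff.rfl),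
    setLIntegral_setLIntegral_eq_lintegral_lintegral_indicator (E := Prod.swap ⁻¹' E) hT hJ
      (fun y x => hIJ x y),
    lintegral_lintegral_swap (f := fun x y => E.indicator (Function.uncurry f) (x, y))
      (hf.indicator hE).aemeasurable]
  rfl

end Tonelli

theorem measure_Ioo_eq_measure_Ioc_of_measure_singleton {ν : Measure ℝ} {a u : ℝ}
    (hu : ν {u} = 0) : ν (Ioo a u) = ν (Ioc a u) := by
  rw [← Ioc_sdiff_right, measure_sdiff_null hu]

section Interval

variable (μ ν : Measure ℝ)

theorem ae_measure_singleton_eq_zero [NullSingletonClass μ] [SFinite ν] :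
    ∀ᵐ x ∂μ, ν {x} = 0 := by
  filter_upwards [(Measure.countable_meas_level_set_pos (μ := ν) measurable_id).ae_notMem μ]
    with x hx
  simpa using hx

theorem two_mul_setLIntegral_measure_Ioc [SFinite μ] [NullSingletonClass μ] (s t : ℝ) :
    2 * ∫⁻ u in Ioc s t, μ (Ioc u t) ∂μ = μ (Ioc s t) ^ 2 := by
  have hswap : ∫⁻ u in Ioc s t, μ (Ioo s u) ∂μ = ∫⁻ u in Ioc s t, μ (Ioc u t) ∂μ := by
    simpa using setLIntegral_setLIntegral_swap (μ := μ) (ν := μ) (f := fun _ _ => 1)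
      (I := fun u => Ioo s u) (J := fun v => Ioc v t) measurableSet_Ioc measurableSet_Ioc
      (fun _ => measurableSet_Ioo) (fun _ => measurableSet_Ioc) (by measurability)
      (fun u v => by simp only [mem_Ioc, mem_Ioo]; grind) measurable_const
  have hsplit : ∀ u ∈ Ioc s t, μ (Ioo s u) + μ (Ioc u t) = μ (Ioc s t) := fun u hu => by
    rw [measure_congr Ioo_ae_eq_Ioc,
      ← measure_union (Ioc_disjoint_Ioc_of_le le_rfl) measurableSet_Ioc,
      Ioc_union_Ioc_eq_Ioc hu.1.le hu.2]
  have hmono : Monotone fun u => μ (Ioo s u) := fun _ _ h => measure_mono (Ioo_subset_Ioo_right h)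
  calc 2 * ∫⁻ u in Ioc s t, μ (Ioc u t) ∂μ
      = ∫⁻ u in Ioc s t, μ (Ioo s u) ∂μ + ∫⁻ u in Ioc s t, μ (Ioc u t) ∂μ := by
        rw [two_mul, hswap]
    _ = ∫⁻ u in Ioc s t, μ (Ioc s t) ∂μ := by
        rw [← lintegral_add_left hmono.measurable]
        exact setLIntegral_congr_fun measurableSet_Ioc hsplit
    _ = μ (Ioc s t) ^ 2 := by rw [setLIntegral_const, sq]

theorem setLIntegral_measure_Ioc_sq [SFinite μ] [NullSingletonClass μ] [SFinite ν] (a t : ℝ) :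
    ∫⁻ s in Ioc a t, μ (Ioc s t) ^ 2 ∂ν =
      2 * ∫⁻ s in Ioc a t, ∫⁻ u in Ioc a s, ν (Ioc a u) ∂μ ∂μ := by
  have hanti : Antitone fun u => μ (Ioc u t) := fun _ _ h => measure_mono (Ioc_subset_Ioc_left h)
  have hmono : Monotone fun u => ν (Ioc a u) := fun _ _ h => measure_mono (Ioc_subset_Ioc_right h)
  have hL : ∫⁻ s in Ioc a t, ∫⁻ u in Ioc s t, μ (Ioc u t) ∂μ ∂ν =
      ∫⁻ u in Ioc a t, μ (Ioc u t) * ν (Ioo a u) ∂μ := by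
    simpa [setLIntegral_const] using setLIntegral_setLIntegral_swap (μ := ν) (ν := μ)
      (f := fun _ u => μ (Ioc u t)) (I := fun s => Ioc s t) (J := fun u => Ioo a u)
      measurableSet_Ioc measurableSet_Ioc (fun _ => measurableSet_Ioc)
      (fun _ => measurableSet_Ioo) (by measurability)
      (fun s u => by simp only [mem_Ioc, mem_Ioo]; grind) (hanti.measurable.comp measurable_snd)
  have hR : ∫⁻ s in Ioc a t, ∫⁻ u in Ioc a s, ν (Ioc a u) ∂μ ∂μ =
      ∫⁻ u in Ioc a t, ν (Ioc a u) * μ (Ioc u t) ∂μ := by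
    simpa [setLIntegral_const, measure_congr (μ := μ) Ioc_ae_eq_Icc] using
      setLIntegral_setLIntegral_swap (μ := μ) (ν := μ)
      (f := fun _ u => ν (Ioc a u)) (I := fun s => Ioc a s) (J := fun u => Icc u t)
      measurableSet_Ioc measurableSet_Ioc (fun _ => measurableSet_Ioc)
      (fun _ => measurableSet_Icc) (by measurability)
      (fun s u => by simp only [mem_Ioc, mem_Icc]; grind) (hmono.measurable.comp measurable_snd)
  simp_rw [← two_mul_setLIntegral_measure_Ioc μ]
  rw [lintegral_const_mul' _ _ ENNReal.ofNat_ne_top, hL, hR]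
  congr 1
  refine setLIntegral_congr_fun_ae measurableSet_Ioc ?_
  filter_upwards [ae_measure_singleton_eq_zero μ ν] with u hu _
  rw [measure_Ioo_eq_measure_Ioc_of_measure_singleton hu, mul_comm]

theorem setLIntegral_measure_Ioc_lt_top [IsLocallyFiniteMeasure μ] [IsLocallyFiniteMeasure ν]
    (a s : ℝ) : ∫⁻ u in Ioc a s, ν (Ioc a u) ∂μ < ∞ :=
  calc ∫⁻ u in Ioc a s, ν (Ioc a u) ∂μ ≤ ∫⁻ _ in Ioc a s, ν (Ioc a s) ∂μ :=
        setLIntegral_mono measurable_const fun _ hu => measure_mono (Ioc_subset_Ioc_right hu.2)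
    _ = ν (Ioc a s) * μ (Ioc a s) := setLIntegral_const _ _
    _ < ∞ := ENNReal.mul_lt_top measure_Ioc_lt_top measure_Ioc_lt_top

end Interval

namespace StieltjesFunction

theorem nullSingletonClass_measure (f : StieltjesFunction ℝ) (hf : Continuous fun x => f x) :
    NullSingletonClass f.measure :=
  ⟨fun x => by
    rw [f.measure_singleton, hf.continuousWithinAt.leftLim_eq, sub_self, ENNReal.ofReal_zero]⟩

theorem setIntegral_sub_eq_toReal_setLIntegral (f : StieltjesFunction ℝ) (μ : Measure ℝ)
    (a s : ℝ) :
    ∫ u in Ioc a s, (f u - f a) ∂μ = (∫⁻ u in Ioc a s, f.measure (Ioc a u) ∂μ).toReal := by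
  have hnonneg : 0 ≤ᵐ[μ.restrict (Ioc a s)] fun u => f u - f a :=
    (ae_restrict_iff' measurableSet_Ioc).2 (ae_of_all _ fun u hu => sub_nonneg.2 (f.mono hu.1.le))
  rw [integral_eq_lintegral_of_nonneg_ae hnonneg
    (f.mono.measurable.sub measurable_const).aestronglyMeasurable]
  congr 1
  exact setLIntegral_congr_fun measurableSet_Ioc fun u _ => (f.measure_Ioc a u).symm

end StieltjesFunction

theorem stieltjes_fubini_identity_general (B Λ : StieltjesFunction ℝ)
    (hBc : Continuous fun x => B x)
    (t : ℝ) :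
    ∫ s in Ioc 0 t, (B t - B s) ^ 2 ∂Λ.measure =
      2 * ∫ s in Ioc 0 t, (∫ u in Ioc 0 s, (Λ u - Λ 0) ∂B.measure) ∂B.measure := by
  have := B.nullSingletonClass_measure hBc
  have hLHS : ∫ s in Ioc 0 t, (B t - B s) ^ 2 ∂Λ.measure =
      (∫⁻ s in Ioc 0 t, B.measure (Ioc s t) ^ 2 ∂Λ.measure).toReal := by
    rw [integral_eq_lintegral_of_nonneg_ae (f := fun s => (B t - B s) ^ 2)
      (ae_of_all _ fun _ => sq_nonneg _) ((continuous_const.sub hBc).pow 2).aestronglyMeasurable]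
    congr 1
    refine setLIntegral_congr_fun measurableSet_Ioc fun s hs => ?_
    rw [B.measure_Ioc, ENNReal.ofReal_pow (sub_nonneg.2 (B.mono hs.2))]
  have hRHS : ∫ s in Ioc 0 t, (∫ u in Ioc 0 s, (Λ u - Λ 0) ∂B.measure) ∂B.measure =
      (∫⁻ s in Ioc 0 t, ∫⁻ u in Ioc 0 s, Λ.measure (Ioc 0 u) ∂B.measure ∂B.measure).toReal := by
    simp_rw [Λ.setIntegral_sub_eq_toReal_setLIntegral]
    have hmono : Monotone fun s => ∫⁻ u in Ioc 0 s, Λ.measure (Ioc 0 u) ∂B.measure :=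
      fun _ _ h => lintegral_mono_set (Ioc_subset_Ioc_right h)
    exact integral_toReal hmono.measurable.aemeasurable
      (ae_of_all _ (setLIntegral_measure_Ioc_lt_top _ _ 0))
  rw [hLHS, hRHS, setLIntegral_measure_Ioc_sq, ENNReal.toReal_mul, ENNReal.toReal_ofNat]

/-- Fubini-type identity (Eq. (2.7) of Section 3): for `B` continuous nondecreasing with
`B_0 = 0` and `Λ` nondecreasing right-continuous,
`∫₀ᵗ (B_t − B_s)² dΛ_s = 2 ∫₀ᵗ ( ∫₀ˢ (Λ_u − Λ_0) dB_u ) dB_s`. -/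
theorem stieltjes_fubini_identity (B Λ : StieltjesFunction ℝ)
    (hBc : Continuous fun x => B x) (hB0 : B 0 = 0)
    (t : ℝ) (ht : 0 ≤ t) :
    ∫ s in Ioc 0 t, (B t - B s) ^ 2 ∂Λ.measure =
      2 * ∫ s in Ioc 0 t, (∫ u in Ioc 0 s, (Λ u - Λ 0) ∂B.measure) ∂B.measure :=
  stieltjes_fubini_identity_general B Λ hBc t
end

section
/- Let B: [0,∞) → [0,∞) be a continuous nondecreasing function with B_0 = 0 and Λ: [0,∞) → ℝ a nondecreasing right-continuous function with Λ_t → ∞ as t → ∞. Define B̃_t = ∫₀ᵗ (B_t − B_s)² dΛ_s. Assume ∫₀^∞ (Λ_s − Λ_0) dB_s = ∞ and B̃_t → ∞ as t → ∞. Then B_t² / B̃_t → 0 as t → ∞. -/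
open MeasureTheory Set Filter Topology

/-!
Write `B̃_t = ∫_{(0,t]} (B_t - B_s)² dΛ_s`. If `B` stays bounded, then `B_t² / B̃_t → 0` simply
because `B̃_t → ∞`. If `B_t → ∞`, restricting the integral to `(0,T]` gives
`B̃_t ≥ (Λ_T - Λ_0) (B_t - B_T)²`, so `B̃_t / B_t²` is eventually at least `(Λ_T - Λ_0) / 4`,
which is arbitrarily large since `Λ_T → ∞`.
-/

theorem integrableOn_sq_sub_Ioc {B : ℝ → ℝ} (hB : Monotone B) (μ : Measure ℝ)
    [IsLocallyFiniteMeasure μ] (a t : ℝ) :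
    IntegrableOn (fun s => (B t - B s) ^ 2) (Ioc a t) μ := by
  refine IntegrableOn.mono_set ?_ Ioc_subset_Icc_self
  refine AntitoneOn.integrableOn_isCompact isCompact_Icc fun s _ u hu hsu => ?_
  exact pow_le_pow_left₀ (sub_nonneg.2 (hB hu.2)) (sub_le_sub_left (hB hsu) _) 2

theorem mul_sq_sub_le_integral_sq_sub {B : ℝ → ℝ} (hB : Monotone B) (Λ : StieltjesFunction ℝ)
    {a T t : ℝ} (haT : a ≤ T) (hTt : T ≤ t) :
    (Λ T - Λ a) * (B t - B T) ^ 2 ≤ ∫ s in Ioc a t, (B t - B s) ^ 2 ∂Λ.measure := by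
  have hint := integrableOn_sq_sub_Ioc hB Λ.measure a t
  calc (Λ T - Λ a) * (B t - B T) ^ 2
    _ = ∫ _ in Ioc a T, (B t - B T) ^ 2 ∂Λ.measure := by
      rw [setIntegral_const, measureReal_def, Λ.measure_Ioc,
        ENNReal.toReal_ofReal (sub_nonneg.2 (Λ.mono haT)), smul_eq_mul]
    _ ≤ ∫ s in Ioc a T, (B t - B s) ^ 2 ∂Λ.measure := by
      refine setIntegral_mono_on ?_ (hint.mono_set (Ioc_subset_Ioc_right hTt)) measurableSet_Ioc
        fun s hs => ?_
      · exact integrableOn_const (by simp [Λ.measure_Ioc])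
      · exact pow_le_pow_left₀ (sub_nonneg.2 (hB hTt)) (sub_le_sub_left (hB hs.2) _) 2
    _ ≤ ∫ s in Ioc a t, (B t - B s) ^ 2 ∂Λ.measure :=
      setIntegral_mono_set hint
        (Eventually.of_forall fun s => sq_nonneg _) (Ioc_subset_Ioc_right hTt).eventuallyLE

theorem tendsto_integral_sq_sub_div_sq_atTop {B : ℝ → ℝ} (hB : Monotone B)
    (hBtop : Tendsto B atTop atTop) {Λ : StieltjesFunction ℝ}
    (hΛtop : Tendsto (fun t => Λ t) atTop atTop) (a : ℝ) :
    Tendsto (fun t => (∫ s in Ioc a t, (B t - B s) ^ 2 ∂Λ.measure) / B t ^ 2) atTop atTop := by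
  refine tendsto_atTop.2 fun M => ?_
  obtain ⟨T, hΛT, haT⟩ : ∃ T, Λ a + 4 * M ≤ Λ T ∧ a ≤ T :=
    ((hΛtop.eventually_ge_atTop _).and (eventually_ge_atTop a)).exists
  have hratio : ∀ᶠ t in atTop, B T / B t ≤ 1 / 2 :=
    (tendsto_const_nhds.div_atTop hBtop).eventually (eventually_le_nhds (by norm_num))
  filter_upwards [eventually_ge_atTop T, hBtop.eventually_gt_atTop 0, hratio]
    with t hTt hBt hBTt
  have hsq : 1 / 4 ≤ (1 - B T / B t) ^ 2 := by nlinarith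
  calc M ≤ (Λ T - Λ a) * (1 / 4) := by linarith
    _ ≤ (Λ T - Λ a) * (1 - B T / B t) ^ 2 :=
      mul_le_mul_of_nonneg_left hsq (sub_nonneg.2 (Λ.mono haT))
    _ = (Λ T - Λ a) * (B t - B T) ^ 2 / B t ^ 2 := by field_simp
    _ ≤ _ := by
      gcongr
      exact mul_sq_sub_le_integral_sq_sub hB Λ haT hTt

theorem sq_div_Btilde_tendsto_zero_general (B Λ : StieltjesFunction ℝ)
    (hΛtop : Tendsto (fun t => Λ t) atTop atTop)
    (hBtilde : Tendsto (fun t => ∫ s in Ioc 0 t, (B t - B s) ^ 2 ∂Λ.measure) atTop atTop) :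
    Tendsto (fun t => B t ^ 2 / ∫ s in Ioc 0 t, (B t - B s) ^ 2 ∂Λ.measure)
      atTop (𝓝 0) := by
  rcases tendsto_atTop_of_monotone B.mono with hBtop | ⟨c, hc⟩
  · exact (tendsto_integral_sq_sub_div_sq_atTop B.mono hBtop hΛtop 0).inv_tendsto_atTop.congr
      fun t => inv_div _ _
  · exact (hc.pow 2).div_atTop hBtilde

/-- Deterministic part of the proof of Proposition 3.1: with `B` continuous nondecreasing,
`B_0 = 0`, `Λ` nondecreasing right-continuous with `Λ_t → ∞`,
`B̃_t = ∫₀ᵗ (B_t − B_s)² dΛ_s`, if `∫₀^∞ (Λ_s − Λ_0) dB_s = ∞` and `B̃_t → ∞`, then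
`B_t² / B̃_t → 0` as `t → ∞`. -/
theorem sq_div_Btilde_tendsto_zero (B Λ : StieltjesFunction ℝ)
    (hBc : Continuous fun x => B x) (hB0 : B 0 = 0)
    (hΛtop : Tendsto (fun t => Λ t) atTop atTop)
    (hint : (∫⁻ s in Ioi (0 : ℝ), ENNReal.ofReal (Λ s - Λ 0) ∂B.measure) = ⊤)
    (hBtilde : Tendsto (fun t => ∫ s in Ioc 0 t, (B t - B s) ^ 2 ∂Λ.measure) atTop atTop) :
    Tendsto (fun t => B t ^ 2 / ∫ s in Ioc 0 t, (B t - B s) ^ 2 ∂Λ.measure)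
      atTop (𝓝 0) :=
  sq_div_Btilde_tendsto_zero_general B Λ hΛtop hBtilde
end

section
/- Let K: [0,∞) → [0,∞) be a continuous nondecreasing function with K_0 = 0, g ≥ 0 a Borel function with ∫₀ᵗ g_s dK_s < ∞ for all t and ∫₀^∞ g_s dK_s = ∞, and set ε_t = exp(∫₀ᵗ g_s dK_s). Let Γ: [0,∞) → (0,∞) be a continuous nondecreasing function and Λ: [0,∞) → [0,∞) a nondecreasing right-continuous function such that Λ_t Γ_t^{−2} → 0 as t → ∞. Define B_t = ∫₀ᵗ Γ_s^{−1} dε_s and B̃_t = ∫₀ᵗ (B_t − B_s)² dΛ_s. Then B̃_t / ε_t² → 0 as t → ∞ (hence ε_t B̃_t^{−1/2} → ∞ whenever B̃ is eventually positive). -/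
open MeasureTheory Set Filter Topology

/-- `ε_t = exp(∫₀ᵗ g_s dK_s)`. -/
noncomputable def epsP (K : StieltjesFunction ℝ) (g : ℝ → ℝ) (t : ℝ) : ℝ :=
  Real.exp (∫ s in Ioc 0 t, g s ∂K.measure)

/-- `B_t = ∫₀ᵗ Γ_s⁻¹ dε_s`; since `K` is continuous, `dε_s = ε_s g_s dK_s`, so
`B_t = ∫₀ᵗ Γ_s⁻¹ ε_s g_s dK_s`. -/
noncomputable def BP (K : StieltjesFunction ℝ) (g Γ : ℝ → ℝ) (t : ℝ) : ℝ :=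
  ∫ s in Ioc 0 t, (Γ s)⁻¹ * epsP K g s * g s ∂K.measure

/-- `B̃_t = ∫₀ᵗ (B_t − B_s)² dΛ_s`. -/
noncomputable def BtildeP (K : StieltjesFunction ℝ) (g Γ : ℝ → ℝ) (Λ : StieltjesFunction ℝ)
    (t : ℝ) : ℝ :=
  ∫ s in Ioc 0 t, (BP K g Γ t - BP K g Γ s) ^ 2 ∂Λ.measure

open scoped ENNReal

/-!
Write `F t = ∫₀ᵗ g dK`, so that `ε = exp F`, `dε = ε dF` and `dB = Γ⁻¹ dε`. Expanding the square and
applying Fubini, `B̃_t = ∫∫_{(0,t]²} Λ(0, u ∧ v) dB_u dB_v`. Given `δ > 0`, pick `a ≥ 0` with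
`Λ ≤ δ Γ²` on `[a, ∞)`; as `Γ` is nondecreasing,
`Λ(0, u ∧ v) ≤ Γ_u Γ_v (c 1{u ≤ a} + c 1{v ≤ a} + 2δ)` with `c = Λ_a / Γ_0²`, and the factors
`Γ_u Γ_v` turn `dB_u dB_v` into `dε_u dε_v`, so `B̃_t ≤ 2 (c ∫₀ᵃ dε + δ ∫₀ᵗ dε) ∫₀ᵗ dε`.
Continuity of `K` makes `F` continuous, whence `∫₀ᵗ dε = ∫₀ᵗ e^F dF ≤ 2 ε_t`. Thus
`B̃_t ≤ C_δ ε_t + 8 δ ε_t²`, while `ε_t → ∞` because `∫₀^∞ g dK = ∞`.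
-/

section DistributionFunction

variable {μ : Measure ℝ} {a : ℝ}

theorem continuousOn_measureReal_Ioc [NullSingletonClass μ] {b : ℝ} (hb : μ (Ioc a b) ≠ ∞) :
    ContinuousOn (fun t => μ.real (Ioc a t)) (Icc a b) := by
  have h1 : IntegrableOn (fun _ => (1 : ℝ)) (Icc a b) μ := by
    rw [integrableOn_const_iff, ← measure_congr Ioc_ae_eq_Icc]
    exact .inr hb.lt_top
  simpa using intervalIntegral.continuousOn_primitive h1

theorem measure_Ioc_eq_ofReal_sub (hfin : ∀ t, μ (Ioc a t) ≠ ∞) {r t : ℝ} (har : a ≤ r)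
    (hrt : r ≤ t) : μ (Ioc r t) = ENNReal.ofReal (μ.real (Ioc a t) - μ.real (Ioc a r)) := by
  have hrt_fin : μ (Ioc r t) ≠ ∞ :=
    measure_ne_top_of_subset (Ioc_subset_Ioc_left har) (hfin t)
  rw [← Ioc_union_Ioc_eq_Ioc har hrt, measureReal_union (Ioc_disjoint_Ioc_of_le le_rfl)
    measurableSet_Ioc (hfin r) hrt_fin, add_sub_cancel_left, ofReal_measureReal hrt_fin]

theorem setLIntegral_exp_measureReal_Ioc_le_of_le (hfin : ∀ t, μ (Ioc a t) ≠ ∞) {r t : ℝ}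
    (har : a ≤ r) (hrt : r ≤ t) :
    ∫⁻ s in Ioc r t, ENNReal.ofReal (Real.exp (μ.real (Ioc a s))) ∂μ ≤
      ENNReal.ofReal (Real.exp (μ.real (Ioc a t)) * (μ.real (Ioc a t) - μ.real (Ioc a r))) := by
  calc ∫⁻ s in Ioc r t, ENNReal.ofReal (Real.exp (μ.real (Ioc a s))) ∂μ
      ≤ ∫⁻ _ in Ioc r t, ENNReal.ofReal (Real.exp (μ.real (Ioc a t))) ∂μ := by
        refine setLIntegral_mono measurable_const fun s hs => ?_
        gcongr
        exacts [hfin t, hs.2]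
    _ = _ := by
        rw [setLIntegral_const, measure_Ioc_eq_ofReal_sub hfin har hrt,
          ENNReal.ofReal_mul (Real.exp_pos _).le]

theorem setLIntegral_exp_measureReal_Ioc_le_of_le_one (hfin : ∀ t, μ (Ioc a t) ≠ ∞) {t : ℝ}
    (ht : μ.real (Ioc a t) ≤ 1) :
    ∫⁻ s in Ioc a t, ENNReal.ofReal (Real.exp (μ.real (Ioc a s))) ∂μ ≤
      ENNReal.ofReal (2 * Real.exp (μ.real (Ioc a t))) := by
  rcases le_total t a with hta | hat
  · simp [Ioc_eq_empty_of_le hta]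
  refine (setLIntegral_exp_measureReal_Ioc_le_of_le hfin le_rfl hat).trans ?_
  rw [Ioc_self, measureReal_empty, sub_zero]
  exact ENNReal.ofReal_le_ofReal (by nlinarith [Real.exp_pos (μ.real (Ioc a t))])

-- A substitute for the chain rule `∫ e^F dF = e^{F t} - e^{F a}`, `F = μ.real (Ioc a ·)`: by
-- continuity of `F`, cut `(a, t]` at `r` with `F r = F t - 1` and induct on `⌈F t⌉`, using
-- `2 e^{-1} + 1 ≤ 2`.
theorem setLIntegral_exp_measureReal_Ioc_le [NullSingletonClass μ]
    (hfin : ∀ t, μ (Ioc a t) ≠ ∞) (t : ℝ) :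
    ∫⁻ s in Ioc a t, ENNReal.ofReal (Real.exp (μ.real (Ioc a s))) ∂μ ≤
      ENNReal.ofReal (2 * Real.exp (μ.real (Ioc a t))) := by
  suffices ∀ n : ℕ, ∀ t, μ.real (Ioc a t) ≤ n →
      ∫⁻ s in Ioc a t, ENNReal.ofReal (Real.exp (μ.real (Ioc a s))) ∂μ ≤
        ENNReal.ofReal (2 * Real.exp (μ.real (Ioc a t))) from
    this _ t (Nat.le_ceil _)
  intro n
  induction n with
  | zero =>
    exact fun t ht => setLIntegral_exp_measureReal_Ioc_le_of_le_one hfin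
      (by push_cast at ht; linarith)
  | succ n ih =>
    intro t ht
    by_cases h1 : μ.real (Ioc a t) ≤ 1
    · exact setLIntegral_exp_measureReal_Ioc_le_of_le_one hfin h1
    push Not at h1
    have hat : a ≤ t := by
      by_contra! hta
      simp [Ioc_eq_empty_of_le hta.le] at h1
      linarith
    obtain ⟨r, ⟨har, hrt⟩, hr⟩ : μ.real (Ioc a t) - 1 ∈ (fun s => μ.real (Ioc a s)) '' Icc a t :=
      intermediate_value_Icc hat (continuousOn_measureReal_Ioc (hfin t))
        ⟨by simp only [Ioc_self, measureReal_empty]; linarith, by linarith⟩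
    simp only at hr
    have he : Real.exp (μ.real (Ioc a t)) / Real.exp 1 ≤ Real.exp (μ.real (Ioc a t)) / 2 :=
      div_le_div_of_nonneg_left (Real.exp_pos _).le two_pos (by linarith [Real.add_one_le_exp 1])
    calc _ = ∫⁻ s in Ioc a r, ENNReal.ofReal (Real.exp (μ.real (Ioc a s))) ∂μ +
            ∫⁻ s in Ioc r t, ENNReal.ofReal (Real.exp (μ.real (Ioc a s))) ∂μ := by
          rw [← lintegral_union measurableSet_Ioc (Ioc_disjoint_Ioc_of_le le_rfl),
            Ioc_union_Ioc_eq_Ioc har hrt]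
      _ ≤ ENNReal.ofReal (2 * Real.exp (μ.real (Ioc a r))) +
            ENNReal.ofReal (Real.exp (μ.real (Ioc a t)) * (μ.real (Ioc a t) - μ.real (Ioc a r))) :=
          add_le_add (ih r (by push_cast at ht; linarith))
            (setLIntegral_exp_measureReal_Ioc_le_of_le hfin har hrt)
      _ ≤ ENNReal.ofReal (2 * Real.exp (μ.real (Ioc a t))) := by
          rw [hr, sub_sub_cancel, mul_one, ← ENNReal.ofReal_add (by positivity) (by positivity),
            Real.exp_sub]
          gcongr
          linarith

end DistributionFunction

theorem setLIntegral_sq_setLIntegral_Ioc {μ ν : Measure ℝ} [SFinite μ] [SFinite ν]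
    {φ : ℝ → ℝ≥0∞} (hφ : Measurable φ) (a t : ℝ) :
    ∫⁻ s in Ioc a t, (∫⁻ u in Ioc s t, φ u ∂μ) ^ 2 ∂ν =
      ∫⁻ p in Ioc a t ×ˢ Ioc a t, φ p.1 * φ p.2 * ν (Ioo a (min p.1 p.2)) ∂μ.prod μ := by
  set h : ℝ × ℝ → ℝ≥0∞ := fun p => φ p.1 * φ p.2
  have hsq : ∀ s, (∫⁻ u in Ioc s t, φ u ∂μ) ^ 2 =
      ∫⁻ p, (Ioc s t ×ˢ Ioc s t).indicator h p ∂μ.prod μ := fun s => by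
    rw [lintegral_indicator (measurableSet_Ioc.prod measurableSet_Ioc), ← Measure.prod_restrict,
      lintegral_prod_mul hφ.aemeasurable hφ.aemeasurable, sq]
  have hmeas : Measurable (Function.uncurry fun s p => (Ioc s t ×ˢ Ioc s t).indicator h p) := by
    have hset : MeasurableSet {q : ℝ × (ℝ × ℝ) | q.2 ∈ Ioc q.1 t ×ˢ Ioc q.1 t} := by
      simp only [mem_prod, mem_Ioc, ofPred_and]
      refine ((measurableSet_lt ?_ ?_).inter (measurableSet_le ?_ ?_)).inter
        ((measurableSet_lt ?_ ?_).inter (measurableSet_le ?_ ?_)) <;> fun_prop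
    exact ((hφ.comp (measurable_fst.comp measurable_snd)).mul
      (hφ.comp (measurable_snd.comp measurable_snd))).indicator hset
  simp_rw [hsq]
  rw [lintegral_lintegral_swap hmeas.aemeasurable,
    ← lintegral_indicator (measurableSet_Ioc.prod measurableSet_Ioc)]
  refine lintegral_congr fun p => ?_
  by_cases hp : p ∈ Ioc a t ×ˢ Ioc a t
  · have hind : ∀ s, (Ioc s t ×ˢ Ioc s t).indicator h p = (Iio (min p.1 p.2)).indicator
        (fun _ => h p) s := fun s => by
      simp only [indicator, mem_prod, mem_Ioc, mem_Iio, lt_min_iff, hp.1.2, hp.2.2, and_true]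
    have hIoo : Iio (min p.1 p.2) ∩ Ioc a t = Ioo a (min p.1 p.2) := by
      ext s
      simp only [mem_inter_iff, mem_Iio, mem_Ioc, mem_Ioo]
      constructor
      · exact fun h => ⟨h.2.1, h.1⟩
      · exact fun h => ⟨h.2, h.1, h.2.le.trans ((min_le_left _ _).trans hp.1.2)⟩
    simp_rw [hind, indicator_of_mem hp]
    rw [lintegral_indicator_const measurableSet_Iio, Measure.restrict_apply measurableSet_Iio, hIoo]
  · rw [indicator_of_notMem hp]
    refine setLIntegral_eq_zero measurableSet_Ioc fun s hs => indicator_of_notMem ?_ _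
    exact fun hp' => hp ⟨Ioc_subset_Ioc_left hs.1.le hp'.1, Ioc_subset_Ioc_left hs.1.le hp'.2⟩

theorem lintegral_prod_mul_mul_add {α : Type*} [MeasurableSpace α] {μ : Measure α} [SFinite μ]
    {ψ θ : α → ℝ≥0∞} (hψ : Measurable ψ) (hθ : Measurable θ) :
    ∫⁻ p, ψ p.1 * ψ p.2 * (θ p.1 + θ p.2) ∂μ.prod μ =
      2 * (∫⁻ x, ψ x * θ x ∂μ) * ∫⁻ x, ψ x ∂μ := by
  have hsplit : ∀ p : α × α, ψ p.1 * ψ p.2 * (θ p.1 + θ p.2) =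
      ψ p.1 * θ p.1 * ψ p.2 + ψ p.1 * (ψ p.2 * θ p.2) := fun p => by ring
  simp_rw [hsplit]
  rw [lintegral_add_left (by fun_prop),
    lintegral_prod_mul (f := fun x => ψ x * θ x) (by fun_prop) hψ.aemeasurable,
    lintegral_prod_mul (g := fun x => ψ x * θ x) hψ.aemeasurable (by fun_prop)]
  ring

theorem setLIntegral_mul_indicator_add_const_le {μ : Measure ℝ} {ψ : ℝ → ℝ≥0∞}
    (hψ : Measurable ψ) (a t : ℝ) (C D : ℝ≥0∞) :
    ∫⁻ x in Ioc 0 t, ψ x * ((Iic a).indicator (fun _ => C) x + D) ∂μ ≤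
      (∫⁻ x in Ioc 0 a, ψ x ∂μ) * C + (∫⁻ x in Ioc 0 t, ψ x ∂μ) * D := by
  simp_rw [mul_add, ← indicator_mul_right]
  rw [lintegral_add_left ((by fun_prop : Measurable fun j => ψ j * C).indicator measurableSet_Iic),
    lintegral_indicator measurableSet_Iic, Measure.restrict_restrict measurableSet_Iic,
    lintegral_mul_const _ hψ, lintegral_mul_const _ hψ]
  gcongr
  exact fun x hx => ⟨hx.2.1, hx.1⟩

theorem setIntegral_mul_eq_toReal_setLIntegral_withDensity {α : Type*} [MeasurableSpace α]
    {ν : Measure α} {f g : α → ℝ} (hf : Measurable f) (hg : Measurable g) (hf0 : ∀ x, 0 ≤ f x)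
    (hg0 : ∀ x, 0 ≤ g x) {A : Set α} (hA : MeasurableSet A) :
    ∫ x in A, f x * g x ∂ν =
      (∫⁻ x in A, ENNReal.ofReal (f x) ∂ν.withDensity fun x => ENNReal.ofReal (g x)).toReal := by
  rw [integral_eq_lintegral_of_nonneg_ae (ae_of_all _ fun x => mul_nonneg (hf0 x) (hg0 x))
    (hf.mul hg).aestronglyMeasurable, setLIntegral_withDensity_eq_setLIntegral_mul _
    hg.ennreal_ofReal hf.ennreal_ofReal hA]
  simp_rw [Pi.mul_apply, ENNReal.ofReal_mul (hf0 _), mul_comm]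

theorem StieltjesFunction.nullSingletonClass_measure_s13 {K : StieltjesFunction ℝ}
    (hK : Continuous K) : NullSingletonClass K.measure where
  measure_singleton x := by
    rw [K.measure_singleton, leftLim_eq_of_tendsto
      ((hK.tendsto x).mono_left nhdsWithin_le_nhds), sub_self,
      ENNReal.ofReal_zero]

theorem StieltjesFunction.measure_Ioo_min_le {Λ : StieltjesFunction ℝ} (hΛ0 : 0 ≤ Λ 0)
    {Γ : ℝ → ℝ} (hΓmono : Monotone Γ) (hΓpos : ∀ t, 0 < Γ t) {a δ : ℝ} (ha : 0 ≤ a)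
    (hδ : 0 ≤ δ) (hbound : ∀ s, a ≤ s → Λ s ≤ δ * Γ s ^ 2) {u v : ℝ} (hu : 0 ≤ u) (hv : 0 ≤ v) :
    Λ.measure (Ioo 0 (min u v)) ≤
      ENNReal.ofReal (Γ u * Γ v * if min u v ≤ a then Λ a / Γ 0 ^ 2 else δ) := by
  refine (measure_mono Ioo_subset_Ioc_self).trans ?_
  rw [Λ.measure_Ioc]
  refine ENNReal.ofReal_le_ofReal ((sub_le_self _ hΛ0).trans ?_)
  split_ifs with hma
  · have hΓ0 := hΓpos 0
    calc Λ (min u v) ≤ Λ a := Λ.mono hma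
      _ = Γ 0 ^ 2 * (Λ a / Γ 0 ^ 2) := by field_simp
      _ ≤ Γ u * Γ v * (Λ a / Γ 0 ^ 2) := by
        gcongr
        · exact div_nonneg (hΛ0.trans (Λ.mono ha)) (by positivity)
        · rw [sq]
          exact mul_le_mul (hΓmono hu) (hΓmono hv) hΓ0.le (hΓpos u).le
  · have hm := hΓpos (min u v)
    calc Λ (min u v) ≤ δ * Γ (min u v) ^ 2 := hbound _ (not_le.1 hma).le
      _ ≤ Γ u * Γ v * δ := by
        rw [mul_comm, sq]
        exact mul_le_mul_of_nonneg_right (mul_le_mul (hΓmono (min_le_left u v))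
          (hΓmono (min_le_right u v)) hm.le (hΓpos u).le) hδ

theorem ofReal_ite_min_le_indicator_add (a c δ u v : ℝ) :
    ENNReal.ofReal (if min u v ≤ a then c else δ) ≤
      (Iic a).indicator (fun _ => ENNReal.ofReal c) u + ENNReal.ofReal δ +
        ((Iic a).indicator (fun _ => ENNReal.ofReal c) v + ENNReal.ofReal δ) := by
  split_ifs with hma
  · have hc : ∀ x ≤ a, ENNReal.ofReal c ≤ (Iic a).indicator (fun _ => ENNReal.ofReal c) x :=
      fun x hx => by rw [indicator_of_mem (mem_Iic.2 hx)]
    rcases min_le_iff.1 hma with h | h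
    · exact le_add_right (le_add_right (hc u h))
    · exact le_add_left (le_add_right (hc v h))
  · exact le_add_right le_add_self

theorem tendsto_div_sq_nhds_zero_of_forall_le {f e : ℝ → ℝ} (he : Tendsto e atTop atTop)
    (hf : ∀ t, 0 ≤ f t) (hbound : ∀ δ > 0, ∃ C, ∀ t, f t ≤ C * e t + δ * e t ^ 2) :
    Tendsto (fun t => f t / e t ^ 2) atTop (𝓝 0) := by
  refine tendsto_order.2 ⟨fun b hb => .of_forall fun t => hb.trans_le (by have := hf t; positivity),
    fun b hb => ?_⟩
  obtain ⟨C, hC⟩ := hbound (b / 2) (half_pos hb)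
  filter_upwards [he.eventually_gt_atTop 0,
    ((tendsto_const_nhds (x := C)).div_atTop he).eventually_lt_const (half_pos hb)] with t het hCt
  calc f t / e t ^ 2 ≤ (C * e t + b / 2 * e t ^ 2) / e t ^ 2 := by gcongr; exact hC t
    _ = C / e t + b / 2 := by field_simp
    _ < b := by linarith

theorem tendsto_div_sqrt_atTop_of_div_sq_tendsto_zero {f e : ℝ → ℝ} (he : ∀ t, 0 < e t)
    (hf : ∀ᶠ t in atTop, 0 < f t) (h : Tendsto (fun t => f t / e t ^ 2) atTop (𝓝 0)) :
    Tendsto (fun t => e t / Real.sqrt (f t)) atTop atTop := by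
  have hsqrt : Tendsto (fun t => Real.sqrt (f t) / e t) atTop (𝓝[>] 0) := by
    refine tendsto_nhdsWithin_iff.2 ⟨?_, hf.mono fun t ht => div_pos (Real.sqrt_pos.2 ht) (he t)⟩
    have := (Real.continuous_sqrt.tendsto 0).comp h
    rw [Real.sqrt_zero] at this
    refine this.congr fun t => ?_
    simp [Real.sqrt_div' _ (sq_nonneg (e t)), Real.sqrt_sq (he t).le]
  exact hsqrt.inv_tendsto_nhdsGT_zero.congr fun t => inv_div _ _

-- An `abbrev`, so that the `withDensity` instances (e.g. `NullSingletonClass`) apply to it.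
noncomputable abbrev gdK (K : StieltjesFunction ℝ) (g : ℝ → ℝ) : Measure ℝ :=
  K.measure.withDensity fun s => ENNReal.ofReal (g s)

section Setting

variable {K : StieltjesFunction ℝ} {g Γ : ℝ → ℝ}

theorem epsP_pos (t : ℝ) : 0 < epsP K g t := Real.exp_pos _

theorem gdK_Ioc_ne_top (hgloc : ∀ t : ℝ, (∫⁻ s in Ioc 0 t, ENNReal.ofReal (g s) ∂K.measure) < ⊤)
    (t : ℝ) : gdK K g (Ioc 0 t) ≠ ∞ := by
  rw [gdK, withDensity_apply _ measurableSet_Ioc]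
  exact (hgloc t).ne

theorem epsP_eq_exp_measureReal (hgmeas : Measurable g) (hg0 : ∀ t, 0 ≤ g t) (t : ℝ) :
    epsP K g t = Real.exp ((gdK K g).real (Ioc 0 t)) := by
  have := setIntegral_mul_eq_toReal_setLIntegral_withDensity (ν := K.measure) measurable_const
    hgmeas (fun _ => zero_le_one) hg0 (measurableSet_Ioc (a := (0 : ℝ)) (b := t))
  simp only [one_mul, ENNReal.ofReal_one, lintegral_const, Measure.restrict_apply_univ] at this
  rw [epsP, this]
  rfl

theorem monotone_epsP (hgmeas : Measurable g) (hg0 : ∀ t, 0 ≤ g t)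
    (hgloc : ∀ t : ℝ, (∫⁻ s in Ioc 0 t, ENNReal.ofReal (g s) ∂K.measure) < ⊤) :
    Monotone (epsP K g) := fun s t hst => by
  simp only [epsP_eq_exp_measureReal hgmeas hg0]
  gcongr
  exact gdK_Ioc_ne_top hgloc t

theorem tendsto_epsP_atTop (hgmeas : Measurable g) (hg0 : ∀ t, 0 ≤ g t)
    (hgloc : ∀ t : ℝ, (∫⁻ s in Ioc 0 t, ENNReal.ofReal (g s) ∂K.measure) < ⊤)
    (hgtop : (∫⁻ s in Ioi (0 : ℝ), ENNReal.ofReal (g s) ∂K.measure) = ⊤) :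
    Tendsto (epsP K g) atTop atTop := by
  have hmeas := tendsto_measure_iUnion_atTop (μ := gdK K g)
    (s := fun t => Ioc 0 t) (antitone_const.Ioc monotone_id)
  have htop : gdK K g (Ioi 0) = ∞ := by rwa [withDensity_apply _ measurableSet_Ioi]
  rw [iUnion_Ioc_right, htop] at hmeas
  have hF : Tendsto (fun t => (gdK K g).real (Ioc 0 t)) atTop atTop := by
    rw [← ENNReal.tendsto_ofReal_nhds_top]
    refine hmeas.congr fun t => ?_
    exact (ofReal_measureReal (gdK_Ioc_ne_top hgloc t)).symm
  exact (Real.tendsto_exp_atTop.comp hF).congr fun t => (epsP_eq_exp_measureReal hgmeas hg0 t).symm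

theorem setLIntegral_epsP_le (hKc : Continuous fun x => K x) (hgmeas : Measurable g)
    (hg0 : ∀ t, 0 ≤ g t)
    (hgloc : ∀ t : ℝ, (∫⁻ s in Ioc 0 t, ENNReal.ofReal (g s) ∂K.measure) < ⊤) (t : ℝ) :
    ∫⁻ s in Ioc 0 t, ENNReal.ofReal (epsP K g s) ∂gdK K g ≤ ENNReal.ofReal (2 * epsP K g t) := by
  have := K.nullSingletonClass_measure_s13 hKc
  simp_rw [epsP_eq_exp_measureReal hgmeas hg0]
  exact setLIntegral_exp_measureReal_Ioc_le (gdK_Ioc_ne_top hgloc) t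

theorem BP_eq_toReal (hgmeas : Measurable g) (hg0 : ∀ t, 0 ≤ g t)
    (hgloc : ∀ t : ℝ, (∫⁻ s in Ioc 0 t, ENNReal.ofReal (g s) ∂K.measure) < ⊤)
    (hΓmono : Monotone Γ) (hΓpos : ∀ t, 0 < Γ t) (t : ℝ) :
    BP K g Γ t = (∫⁻ s in Ioc 0 t, ENNReal.ofReal ((Γ s)⁻¹ * epsP K g s) ∂gdK K g).toReal :=
  setIntegral_mul_eq_toReal_setLIntegral_withDensity
    (hΓmono.measurable.inv.mul (monotone_epsP hgmeas hg0 hgloc).measurable) hgmeas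
    (fun s => mul_nonneg (inv_nonneg.2 (hΓpos s).le) (epsP_pos s).le) hg0 measurableSet_Ioc

theorem setLIntegral_Ioc_inv_mul_epsP_ne_top (hgmeas : Measurable g) (hg0 : ∀ t, 0 ≤ g t)
    (hgloc : ∀ t : ℝ, (∫⁻ s in Ioc 0 t, ENNReal.ofReal (g s) ∂K.measure) < ⊤)
    (hΓmono : Monotone Γ) (hΓpos : ∀ t, 0 < Γ t) (t : ℝ) :
    ∫⁻ s in Ioc 0 t, ENNReal.ofReal ((Γ s)⁻¹ * epsP K g s) ∂gdK K g ≠ ∞ := by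
  refine ne_top_of_le_ne_top (b := ∫⁻ _ in Ioc 0 t, ENNReal.ofReal ((Γ 0)⁻¹ * epsP K g t) ∂gdK K g)
    ?_ (setLIntegral_mono measurable_const fun s hs => ?_)
  · rw [setLIntegral_const]
    exact ENNReal.mul_ne_top ENNReal.ofReal_ne_top (gdK_Ioc_ne_top hgloc t)
  · exact ENNReal.ofReal_le_ofReal (mul_le_mul (inv_anti₀ (hΓpos 0) (hΓmono hs.1.le))
      (monotone_epsP hgmeas hg0 hgloc hs.2) (epsP_pos s).le (inv_nonneg.2 (hΓpos 0).le))

theorem BP_sub_BP_eq_toReal (hgmeas : Measurable g) (hg0 : ∀ t, 0 ≤ g t)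
    (hgloc : ∀ t : ℝ, (∫⁻ s in Ioc 0 t, ENNReal.ofReal (g s) ∂K.measure) < ⊤)
    (hΓmono : Monotone Γ) (hΓpos : ∀ t, 0 < Γ t) {s t : ℝ} (hs : 0 ≤ s) (hst : s ≤ t) :
    BP K g Γ t - BP K g Γ s =
      (∫⁻ u in Ioc s t, ENNReal.ofReal ((Γ u)⁻¹ * epsP K g u) ∂gdK K g).toReal := by
  have hfin := setLIntegral_Ioc_inv_mul_epsP_ne_top hgmeas hg0 hgloc hΓmono hΓpos
  rw [BP_eq_toReal hgmeas hg0 hgloc hΓmono hΓpos, BP_eq_toReal hgmeas hg0 hgloc hΓmono hΓpos,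
    ← Ioc_union_Ioc_eq_Ioc hs hst, lintegral_union measurableSet_Ioc
      (Ioc_disjoint_Ioc_of_le le_rfl), ENNReal.toReal_add (hfin s), add_sub_cancel_left]
  exact ne_top_of_le_ne_top (hfin t) (lintegral_mono_set (Ioc_subset_Ioc_left hs))

theorem BtildeP_eq_toReal (hgmeas : Measurable g) (hg0 : ∀ t, 0 ≤ g t)
    (hgloc : ∀ t : ℝ, (∫⁻ s in Ioc 0 t, ENNReal.ofReal (g s) ∂K.measure) < ⊤)
    (hΓmono : Monotone Γ) (hΓpos : ∀ t, 0 < Γ t) (Λ : StieltjesFunction ℝ) (t : ℝ) :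
    BtildeP K g Γ Λ t = (∫⁻ s in Ioc 0 t,
      (∫⁻ u in Ioc s t, ENNReal.ofReal ((Γ u)⁻¹ * epsP K g u) ∂gdK K g) ^ 2 ∂Λ.measure).toReal := by
  have hfin := setLIntegral_Ioc_inv_mul_epsP_ne_top hgmeas hg0 hgloc hΓmono hΓpos t
  rw [BtildeP, ← integral_toReal]
  · refine setIntegral_congr_fun measurableSet_Ioc fun s hs => ?_
    rw [BP_sub_BP_eq_toReal hgmeas hg0 hgloc hΓmono hΓpos hs.1.le hs.2, ENNReal.toReal_pow]
  · refine (Antitone.measurable fun s s' hss' => ?_).aemeasurable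
    gcongr
  · refine ae_restrict_of_forall_mem measurableSet_Ioc fun s hs => ?_
    exact ENNReal.pow_lt_top (ne_top_of_le_ne_top hfin
      (lintegral_mono_set (Ioc_subset_Ioc_left hs.1.le))).lt_top

theorem setLIntegral_sq_increment_le (hgmeas : Measurable g) (hg0 : ∀ t, 0 ≤ g t)
    (hgloc : ∀ t : ℝ, (∫⁻ s in Ioc 0 t, ENNReal.ofReal (g s) ∂K.measure) < ⊤)
    (hΓmono : Monotone Γ) (hΓpos : ∀ t, 0 < Γ t) {Λ : StieltjesFunction ℝ} (hΛ0 : 0 ≤ Λ 0)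
    {a δ : ℝ} (ha : 0 ≤ a) (hδ : 0 ≤ δ) (hbound : ∀ s, a ≤ s → Λ s ≤ δ * Γ s ^ 2) (t : ℝ) :
    ∫⁻ s in Ioc 0 t,
        (∫⁻ u in Ioc s t, ENNReal.ofReal ((Γ u)⁻¹ * epsP K g u) ∂gdK K g) ^ 2 ∂Λ.measure ≤
      2 * (∫⁻ x in Ioc 0 t, ENNReal.ofReal (epsP K g x) *
          ((Iic a).indicator (fun _ => ENNReal.ofReal (Λ a / Γ 0 ^ 2)) x + ENNReal.ofReal δ)
          ∂gdK K g) * ∫⁻ x in Ioc 0 t, ENNReal.ofReal (epsP K g x) ∂gdK K g := by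
  set φ := fun s => ENNReal.ofReal ((Γ s)⁻¹ * epsP K g s)
  set ψ := fun s => ENNReal.ofReal (epsP K g s)
  set θ := fun x => (Iic a).indicator (fun _ => ENNReal.ofReal (Λ a / Γ 0 ^ 2)) x + ENNReal.ofReal δ
  have hε := monotone_epsP hgmeas hg0 hgloc
  have hφ : Measurable φ := (hΓmono.measurable.inv.mul hε.measurable).ennreal_ofReal
  have hφΓ : ∀ u, φ u * ENNReal.ofReal (Γ u) = ψ u := fun u => by
    simp only [φ, ψ]
    rw [← ENNReal.ofReal_mul (mul_nonneg (inv_nonneg.2 (hΓpos u).le) (epsP_pos u).le),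
      mul_comm, mul_inv_cancel_left₀ (hΓpos u).ne']
  have hpt : ∀ p ∈ Ioc 0 t ×ˢ Ioc 0 t,
      φ p.1 * φ p.2 * Λ.measure (Ioo 0 (min p.1 p.2)) ≤ ψ p.1 * ψ p.2 * (θ p.1 + θ p.2) := by
    rintro ⟨u, v⟩ ⟨hu, hv⟩
    calc _ ≤ φ u * φ v * (ENNReal.ofReal (Γ u * Γ v) *
          ENNReal.ofReal (if min u v ≤ a then Λ a / Γ 0 ^ 2 else δ)) := by
          rw [← ENNReal.ofReal_mul (mul_pos (hΓpos u) (hΓpos v)).le]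
          gcongr
          exact Λ.measure_Ioo_min_le hΛ0 hΓmono hΓpos ha hδ hbound hu.1.le hv.1.le
      _ ≤ φ u * φ v * (ENNReal.ofReal (Γ u * Γ v) * (θ u + θ v)) := by
          gcongr
          exact ofReal_ite_min_le_indicator_add a _ δ u v
      _ = ψ u * ψ v * (θ u + θ v) := by
          rw [ENNReal.ofReal_mul (hΓpos u).le, ← hφΓ, ← hφΓ]
          ring
  have hψ : Measurable ψ := hε.measurable.ennreal_ofReal
  have hθ : Measurable θ := (measurable_const.indicator measurableSet_Iic).add measurable_const
  rw [setLIntegral_sq_setLIntegral_Ioc hφ]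
  calc _ ≤ ∫⁻ p in Ioc 0 t ×ˢ Ioc 0 t, ψ p.1 * ψ p.2 * (θ p.1 + θ p.2) ∂(gdK K g).prod (gdK K g) :=
        setLIntegral_mono' (measurableSet_Ioc.prod measurableSet_Ioc) hpt
    _ = _ := by rw [← Measure.prod_restrict, lintegral_prod_mul_mul_add hψ hθ]

theorem BtildeP_le (hKc : Continuous fun x => K x)
    (hgmeas : Measurable g) (hg0 : ∀ t, 0 ≤ g t)
    (hgloc : ∀ t : ℝ, (∫⁻ s in Ioc 0 t, ENNReal.ofReal (g s) ∂K.measure) < ⊤)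
    (hΓmono : Monotone Γ) (hΓpos : ∀ t, 0 < Γ t) {Λ : StieltjesFunction ℝ} (hΛ0 : 0 ≤ Λ 0)
    {a δ : ℝ} (ha : 0 ≤ a) (hδ : 0 ≤ δ) (hbound : ∀ s, a ≤ s → Λ s ≤ δ * Γ s ^ 2) (t : ℝ) :
    BtildeP K g Γ Λ t ≤
      8 * (Λ a / Γ 0 ^ 2) * epsP K g a * epsP K g t + 8 * δ * epsP K g t ^ 2 := by
  have hεa : 0 < epsP K g a := epsP_pos a
  have hεt : 0 < epsP K g t := epsP_pos t
  have hc : 0 ≤ Λ a / Γ 0 ^ 2 := div_nonneg (hΛ0.trans (Λ.mono ha)) (sq_nonneg _)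
  have hM := setLIntegral_epsP_le hKc hgmeas hg0 hgloc
  rw [BtildeP_eq_toReal hgmeas hg0 hgloc hΓmono hΓpos]
  refine ENNReal.toReal_le_of_le_ofReal (by positivity) ?_
  calc _ ≤ _ := setLIntegral_sq_increment_le hgmeas hg0 hgloc hΓmono hΓpos hΛ0 ha hδ hbound t
    _ ≤ 2 * (ENNReal.ofReal (2 * epsP K g a) * ENNReal.ofReal (Λ a / Γ 0 ^ 2) +
          ENNReal.ofReal (2 * epsP K g t) * ENNReal.ofReal δ) *
          ENNReal.ofReal (2 * epsP K g t) := by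
        gcongr
        · exact (setLIntegral_mul_indicator_add_const_le
            (monotone_epsP hgmeas hg0 hgloc).measurable.ennreal_ofReal a t _ _).trans
            (by gcongr <;> exact hM _)
        · exact hM t
    _ = ENNReal.ofReal (8 * (Λ a / Γ 0 ^ 2) * epsP K g a * epsP K g t +
          8 * δ * epsP K g t ^ 2) := by
        rw [← ENNReal.ofReal_mul (by positivity), ← ENNReal.ofReal_mul (by positivity),
          ← ENNReal.ofReal_add (by positivity) (by positivity), ← ENNReal.ofReal_ofNat 2,
          ← ENNReal.ofReal_mul zero_le_two, ← ENNReal.ofReal_mul (by positivity)]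
        ring_nf

theorem exists_BtildeP_le (hKc : Continuous fun x => K x)
    (hgmeas : Measurable g) (hg0 : ∀ t, 0 ≤ g t)
    (hgloc : ∀ t : ℝ, (∫⁻ s in Ioc 0 t, ENNReal.ofReal (g s) ∂K.measure) < ⊤)
    (hΓmono : Monotone Γ) (hΓpos : ∀ t, 0 < Γ t) {Λ : StieltjesFunction ℝ} (hΛ0 : 0 ≤ Λ 0)
    (hΛΓ : Tendsto (fun t => Λ t * ((Γ t) ^ 2)⁻¹) atTop (𝓝 0)) {δ : ℝ} (hδ : 0 < δ) :
    ∃ C, ∀ t, BtildeP K g Γ Λ t ≤ C * epsP K g t + δ * epsP K g t ^ 2 := by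
  obtain ⟨a, ha⟩ := eventually_atTop.1
    (hΛΓ.eventually_lt_const (div_pos hδ (by norm_num : (0 : ℝ) < 8)))
  have hbound : ∀ s, max a 0 ≤ s → Λ s ≤ δ / 8 * Γ s ^ 2 := fun s hs => by
    have := ha s ((le_max_left _ _).trans hs)
    rw [← div_eq_mul_inv, div_lt_iff₀ (pow_pos (hΓpos s) 2)] at this
    exact this.le
  refine ⟨8 * (Λ (max a 0) / Γ 0 ^ 2) * epsP K g (max a 0), fun t => ?_⟩
  have := BtildeP_le hKc hgmeas hg0 hgloc hΓmono hΓpos hΛ0 (le_max_right a 0)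
    (div_pos hδ (by norm_num)).le hbound t
  linarith

end Setting

theorem Btilde_div_eps_sq_tendsto_zero_general (K : StieltjesFunction ℝ)
    (hKc : Continuous fun x => K x)
    (g : ℝ → ℝ) (hgmeas : Measurable g) (hg0 : ∀ t, 0 ≤ g t)
    (hgloc : ∀ t : ℝ, (∫⁻ s in Ioc 0 t, ENNReal.ofReal (g s) ∂K.measure) < ⊤)
    (hgtop : (∫⁻ s in Ioi (0 : ℝ), ENNReal.ofReal (g s) ∂K.measure) = ⊤)
    (Γ : ℝ → ℝ) (hΓmono : Monotone Γ) (hΓpos : ∀ t, 0 < Γ t)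
    (Λ : StieltjesFunction ℝ) (hΛ0 : ∀ t : ℝ, 0 ≤ t → 0 ≤ Λ t)
    (hΛΓ : Tendsto (fun t => Λ t * ((Γ t) ^ 2)⁻¹) atTop (𝓝 0)) :
    Tendsto (fun t => BtildeP K g Γ Λ t / (epsP K g t) ^ 2) atTop (𝓝 0) ∧
      ((∀ᶠ t in atTop, 0 < BtildeP K g Γ Λ t) →
        Tendsto (fun t => epsP K g t / Real.sqrt (BtildeP K g Γ Λ t)) atTop atTop) := by
  have hlim := tendsto_div_sq_nhds_zero_of_forall_le (tendsto_epsP_atTop hgmeas hg0 hgloc hgtop)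
    (fun t => setIntegral_nonneg measurableSet_Ioc fun s _ => sq_nonneg _)
    fun δ hδ => exists_BtildeP_le hKc hgmeas hg0 hgloc hΓmono hΓpos (hΛ0 0 le_rfl) hΛΓ hδ
  exact ⟨hlim, fun hpos => tendsto_div_sqrt_atTop_of_div_sq_tendsto_zero epsP_pos hpos hlim⟩

/-- Remark 3.1 of Section 3: if `K` is continuous nondecreasing with `K_0 = 0`, `g ≥ 0` locally
`K`-integrable with `∫₀^∞ g dK = ∞`, `Γ` continuous nondecreasing positive and `Λ` nondecreasing
right-continuous nonnegative with `Λ_t Γ_t^{−2} → 0`, then `B̃_t / ε_t² → 0`; hence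
`ε_t B̃_t^{−1/2} → ∞` whenever `B̃` is eventually positive. -/
theorem Btilde_div_eps_sq_tendsto_zero (K : StieltjesFunction ℝ)
    (hKc : Continuous fun x => K x) (hK0 : K 0 = 0)
    (g : ℝ → ℝ) (hgmeas : Measurable g) (hg0 : ∀ t, 0 ≤ g t)
    (hgloc : ∀ t : ℝ, (∫⁻ s in Ioc 0 t, ENNReal.ofReal (g s) ∂K.measure) < ⊤)
    (hgtop : (∫⁻ s in Ioi (0 : ℝ), ENNReal.ofReal (g s) ∂K.measure) = ⊤)
    (Γ : ℝ → ℝ) (hΓc : Continuous Γ) (hΓmono : Monotone Γ) (hΓpos : ∀ t, 0 < Γ t)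
    (Λ : StieltjesFunction ℝ) (hΛ0 : ∀ t : ℝ, 0 ≤ t → 0 ≤ Λ t)
    (hΛΓ : Tendsto (fun t => Λ t * ((Γ t) ^ 2)⁻¹) atTop (𝓝 0)) :
    Tendsto (fun t => BtildeP K g Γ Λ t / (epsP K g t) ^ 2) atTop (𝓝 0) ∧
      ((∀ᶠ t in atTop, 0 < BtildeP K g Γ Λ t) →
        Tendsto (fun t => epsP K g t / Real.sqrt (BtildeP K g Γ Λ t)) atTop atTop) :=
  Btilde_div_eps_sq_tendsto_zero_general K hKc g hgmeas hg0 hgloc hgtop Γ hΓmono hΓpos Λ hΛ0 hΛΓ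
end
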